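/- arXiv:1810.03950 — 2 statements merged into one kernel-verified Lean document; each statement's English description precedes it below -/
import Mathlib

section
/- Let K be a field, let s > 1, and let R'ₛ = K[Qₛ]/I' be the algebra of tree class E₆ (Qₛ the quiver with 8s vertices and arrows α₀,…,α_{6s−1}, γ₀,…,γ_{2s−1}; I' generated by all paths of length 5, the commutativity relations α_{3t+2}α_{3t+1}α_{3t} − α_{3(t+s)+2}α_{3(t+s)+1}α_{3(t+s)}, and the zero relations α_{3t}γ_{t−1}α_{3(t+s)−1}). Then the center of R'ₛ is one-dimensional over K, spanned by the identity element. -/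
open FreeAlgebra

namespace E6

/-- Generators of the path algebra of the quiver `Q_s` of the self-injective algebras of tree
class `E₆` (here `n = 6`, so there are `(n+2)s = 8s` vertices): an idempotent generator `e i`
for each vertex `i ∈ ℤ/8sℤ`, an arrow generator `a k` for each arrow `α_k` (`k ∈ ℤ/6sℤ`), and
an arrow generator `g t` for each arrow `γ_t` (`t ∈ ℤ/2sℤ`). -/
inductive Gen (s : ℕ) : Type
  | e : ZMod (8 * s) → Gen s
  | a : ZMod (6 * s) → Gen s
  | g : ZMod (2 * s) → Gen s

variable (s : ℕ) [NeZero s] (K : Type) [Field K]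

instance : NeZero (8 * s) := ⟨Nat.mul_ne_zero (by norm_num) (NeZero.ne s)⟩
instance : NeZero (6 * s) := ⟨Nat.mul_ne_zero (by norm_num) (NeZero.ne s)⟩
instance : NeZero (2 * s) := ⟨Nat.mul_ne_zero (by norm_num) (NeZero.ne s)⟩

/-- The index `3t + j` of the arrow `α_{3t+j}`, as an element of `ℤ/6sℤ`. -/
def ai (t : ZMod (2 * s)) (j : ℕ) : ZMod (6 * s) := ((3 * t.val + j : ℕ) : ZMod (6 * s))

/-- The vertex `4r + j` of the quiver `Q_s`, as an element of `ℤ/8sℤ`. -/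
def vx (r : ZMod (2 * s)) (j : ℕ) : ZMod (8 * s) := ((4 * r.val + j : ℕ) : ZMod (8 * s))

/-- Source vertex of the arrow `α_k`: writing `k = 3t + j` with `j < 3`, the arrows are
`α_{3t} : 4t → 4t+1`, `α_{3t+1} : 4t+1 → 4t+2`, `α_{3t+2} : 4t+2 → 4t+3`. -/
def srcA (k : ZMod (6 * s)) : ZMod (8 * s) :=
  ((4 * (k.val / 3) + k.val % 3 : ℕ) : ZMod (8 * s))

/-- Target vertex of the arrow `α_k`. -/
def tgtA (k : ZMod (6 * s)) : ZMod (8 * s) :=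
  ((4 * (k.val / 3) + k.val % 3 + 1 : ℕ) : ZMod (8 * s))

/-- Source vertex of the arrow `γ_t : 4t+3 → 4(t+1)`. -/
def srcG (t : ZMod (2 * s)) : ZMod (8 * s) := ((4 * t.val + 3 : ℕ) : ZMod (8 * s))

/-- Target vertex of the arrow `γ_t`. -/
def tgtG (t : ZMod (2 * s)) : ZMod (8 * s) := ((4 * (t.val + 1) : ℕ) : ZMod (8 * s))

/-- `x` is the image in the free algebra of one of the arrow generators. -/
def IsArrow (x : FreeAlgebra K (Gen s)) : Prop :=
  (∃ k, x = ι K (Gen.a k)) ∨ ∃ t, x = ι K (Gen.g t)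

/-- The defining relations of the algebra `R'_s = K[Q_s]/I'`: the path-algebra relations for
the quiver `Q_s` (orthogonal idempotents summing to `1`, arrows supported at their source and
target) together with the generators of the ideal `I'`: all paths of length `5`, the
commutativity relations `α_{3t+2}α_{3t+1}α_{3t} = α_{3(t+s)+2}α_{3(t+s)+1}α_{3(t+s)}` and the
zero relations `α_{3t}γ_{t-1}α_{3(t+s)-1} = 0`. -/
inductive Rel : FreeAlgebra K (Gen s) → FreeAlgebra K (Gen s) → Prop
  | vertex_mul (i j : ZMod (8 * s)) :
      Rel (ι K (Gen.e i) * ι K (Gen.e j)) (if i = j then ι K (Gen.e i) else 0)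
  | vertex_sum : Rel (∑ i : ZMod (8 * s), ι K (Gen.e i)) 1
  | a_src (k : ZMod (6 * s)) :
      Rel (ι K (Gen.a k) * ι K (Gen.e (srcA s k))) (ι K (Gen.a k))
  | a_tgt (k : ZMod (6 * s)) :
      Rel (ι K (Gen.e (tgtA s k)) * ι K (Gen.a k)) (ι K (Gen.a k))
  | g_src (t : ZMod (2 * s)) :
      Rel (ι K (Gen.g t) * ι K (Gen.e (srcG s t))) (ι K (Gen.g t))
  | g_tgt (t : ZMod (2 * s)) :
      Rel (ι K (Gen.e (tgtG s t)) * ι K (Gen.g t)) (ι K (Gen.g t))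
  | path5 (x₁ x₂ x₃ x₄ x₅ : FreeAlgebra K (Gen s)) (h₁ : IsArrow s K x₁)
      (h₂ : IsArrow s K x₂) (h₃ : IsArrow s K x₃) (h₄ : IsArrow s K x₄)
      (h₅ : IsArrow s K x₅) :
      Rel (x₁ * x₂ * x₃ * x₄ * x₅) 0
  | comm (t : ZMod (2 * s)) :
      Rel (ι K (Gen.a (ai s t 2)) * (ι K (Gen.a (ai s t 1)) * ι K (Gen.a (ai s t 0))))
          (ι K (Gen.a (ai s (t + (s : ZMod (2 * s))) 2)) *
            (ι K (Gen.a (ai s (t + (s : ZMod (2 * s))) 1)) *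
              ι K (Gen.a (ai s (t + (s : ZMod (2 * s))) 0))))
  | zero_rel (t : ZMod (2 * s)) :
      Rel (ι K (Gen.a (ai s t 0)) *
            (ι K (Gen.g (t - 1)) * ι K (Gen.a (ai s (t + (s : ZMod (2 * s)) - 1) 2)))) 0

/-- The self-injective algebra `R'_s = K[Q_s]/I'` of tree class `E₆`. -/
abbrev Rp : Type := RingQuot (Rel s K)

/-- The vertex idempotent `e_i` of `R'_s`. -/
noncomputable def eIdem (i : ZMod (8 * s)) : Rp s K :=
  RingQuot.mkAlgHom K (Rel s K) (ι K (Gen.e i))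

/-- The arrow `α_k` of `R'_s`. -/
noncomputable def A (k : ZMod (6 * s)) : Rp s K :=
  RingQuot.mkAlgHom K (Rel s K) (ι K (Gen.a k))

/-- The arrow `γ_t` of `R'_s`. -/
noncomputable def G (t : ZMod (2 * s)) : Rp s K :=
  RingQuot.mkAlgHom K (Rel s K) (ι K (Gen.g t))

/-- The indecomposable projective left module `P_i = R e_i`, as a left ideal of `R'_s`. -/
noncomputable def P (i : ZMod (8 * s)) : Submodule (Rp s K) (Rp s K) :=
  Submodule.span (Rp s K) {x | x * eIdem s K i = x}

/-- The arrow ideal (the Jacobson radical) of `R'_s`, as a left submodule. -/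
noncomputable def radIdeal : Submodule (Rp s K) (Rp s K) :=
  Submodule.span (Rp s K)
    {z | ∃ w y : Rp s K, ((∃ k, w = A s K k) ∨ ∃ t, w = G s K t) ∧ z = w * y}

/-- The radical of `P_i`, as a submodule of `P_i`. -/
noncomputable def radP (i : ZMod (8 * s)) : Submodule (Rp s K) ↥(P s K i) :=
  Submodule.comap (P s K i).subtype (radIdeal s K)

/-- The simple module `S_i` at the vertex `i`: the top `P_i / rad P_i` of `P_i`, realized as
the image of `P_i` in `R'_s / rad R'_s`. -/
abbrev S (i : ZMod (8 * s)) : Type :=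
  ↥(Submodule.map (radIdeal s K).mkQ (P s K i))

/-- Right multiplication by `w : R'_s`, as a homomorphism of left modules from `P_i`
to `R'_s`. -/
noncomputable def stepMap (i : ZMod (8 * s)) (w : Rp s K) :
    ↥(P s K i) →ₗ[Rp s K] Rp s K :=
  (LinearMap.toSpanSingleton (Rp s K) (Rp s K) w).comp (P s K i).subtype

end E6



namespace E6
section Aux
set_option linter.unusedSectionVars false
variable (s : ℕ) [NeZero s] (K : Type) [Field K]

/-- The module on which `R'_s` acts: functions on (start vertex, length) pairs. -/
abbrev M := ZMod (8 * s) → ℕ → K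

/-- A path of length `n` starting at `v` is a nonzero basis path. -/
def allowed (v : ZMod (8 * s)) (n : ℕ) : Prop :=
  n ≤ 4 ∧ ∀ j < 2, j + 3 ≤ n → ¬ (4 ∣ (v + (j : ℕ)).val)

instance (v : ZMod (8 * s)) (n : ℕ) : Decidable (allowed s v n) := by
  unfold allowed; infer_instance

lemma allowed_zero (v : ZMod (8 * s)) : allowed s v 0 := ⟨by omega, fun j _ h2 => absurd h2 (by omega)⟩

lemma allowed_one (v : ZMod (8 * s)) : allowed s v 1 := ⟨by omega, fun j _ h2 => absurd h2 (by omega)⟩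

lemma allowed_succ {v : ZMod (8 * s)} {n : ℕ} (h : allowed s v (n + 1)) : allowed s v n :=
  ⟨by have := h.1; omega, fun j hj hj2 => h.2 j hj (by omega)⟩

/-- Action of the vertex idempotent `e_i`. -/
def rE (i : ZMod (8 * s)) : M s K →ₗ[K] M s K where
  toFun f := fun v n => if v + (n : ℕ) = i then f v n else 0
  map_add' f g := by funext v n; dsimp only [Pi.add_apply]; split_ifs <;> simp
  map_smul' c f := by funext v n; dsimp only [Pi.smul_apply]; split_ifs <;> simp

/-- Action of the arrow with source `w`. -/
def rA (w : ZMod (8 * s)) : M s K →ₗ[K] M s K where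
  toFun f := fun v n =>
    if 1 ≤ n ∧ allowed s v n ∧ v + ((n - 1 : ℕ) : ZMod (8 * s)) = w then f v (n - 1) else 0
  map_add' f g := by
    funext v n; dsimp only [Pi.add_apply]; split_ifs <;> simp
  map_smul' c f := by
    funext v n; dsimp only [Pi.smul_apply]; split_ifs <;> simp

lemma rE_apply (i : ZMod (8 * s)) (f : M s K) (v : ZMod (8 * s)) (n : ℕ) :
    rE s K i f v n = if v + (n : ℕ) = i then f v n else 0 := rfl

lemma rA_apply (w : ZMod (8 * s)) (f : M s K) (v : ZMod (8 * s)) (n : ℕ) :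
    rA s K w f v n =
      if 1 ≤ n ∧ allowed s v n ∧ v + ((n - 1 : ℕ) : ZMod (8 * s)) = w then f v (n - 1)
      else 0 := rfl

/-- The representation of the generators. -/
def rGen : Gen s → Module.End K (M s K)
  | Gen.e i => rE s K i
  | Gen.a k => rA s K (srcA s k)
  | Gen.g t => rA s K (srcG s t)

/-- The representation of the free algebra. -/
noncomputable def rFree : FreeAlgebra K (Gen s) →ₐ[K] Module.End K (M s K) :=
  FreeAlgebra.lift K (rGen s K)

lemma natCast_inj8 {a b : ℕ} (ha : a < 8 * s) (hb : b < 8 * s)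
    (h : (a : ZMod (8 * s)) = (b : ZMod (8 * s))) : a = b := by
  have h1 := ZMod.val_cast_of_lt (n := 8 * s) ha
  have h2 := ZMod.val_cast_of_lt (n := 8 * s) hb
  rw [← h1, ← h2, h]

lemma cast_pred_add_one {n : ℕ} (hn : 1 ≤ n) :
    ((n - 1 : ℕ) : ZMod (8 * s)) + 1 = (n : ZMod (8 * s)) := by
  have : n - 1 + 1 = n := by omega
  rw [← this, Nat.cast_add, Nat.cast_one, this]

lemma srcA_ai (t : ZMod (2 * s)) (j : ℕ) (hj : j < 3) :
    srcA s (ai s t j) = ((4 * t.val : ℕ) : ZMod (8 * s)) + (j : ℕ) := by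
  have ht := ZMod.val_lt t
  have hv : (ai s t j).val = 3 * t.val + j := ZMod.val_cast_of_lt (by omega)
  have h1 : (3 * t.val + j) / 3 = t.val := by omega
  have h2 : (3 * t.val + j) % 3 = j := by omega
  rw [srcA, hv, h1, h2, Nat.cast_add]

lemma val_w (t : ZMod (2 * s)) : (((4 * t.val : ℕ) : ZMod (8 * s))).val = 4 * t.val :=
  ZMod.val_cast_of_lt (by have := ZMod.val_lt t; omega)

lemma rE_mul_rE (i j : ZMod (8 * s)) :
    rE s K i * rE s K j = if i = j then rE s K i else 0 := by
  by_cases hij : i = j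
  · subst hij
    rw [if_pos rfl]
    refine LinearMap.ext fun f => funext fun v => funext fun n => ?_
    simp only [Module.End.mul_apply, rE_apply]
    split_ifs <;> rfl
  · rw [if_neg hij]
    refine LinearMap.ext fun f => funext fun v => funext fun n => ?_
    simp only [Module.End.mul_apply, rE_apply, LinearMap.zero_apply, Pi.zero_apply]
    split_ifs with h1 h2 <;> try rfl
    exact absurd (h1.symm.trans h2) hij

lemma sum_rE : ∑ i, rE s K i = 1 := by
  refine LinearMap.ext fun f => funext fun v => funext fun n => ?_
  rw [LinearMap.sum_apply]
  simp [rE_apply, Finset.sum_apply, Finset.sum_ite_eq]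

lemma rA_mul_rE (w : ZMod (8 * s)) : rA s K w * rE s K w = rA s K w := by
  refine LinearMap.ext fun f => funext fun v => funext fun n => ?_
  simp only [Module.End.mul_apply, rA_apply, rE_apply]
  split_ifs with h1 h2 <;> try rfl
  exact absurd h1.2.2 h2

lemma rE_mul_rA (w : ZMod (8 * s)) : rE s K (w + 1) * rA s K w = rA s K w := by
  refine LinearMap.ext fun f => funext fun v => funext fun n => ?_
  simp only [Module.End.mul_apply, rA_apply, rE_apply]
  by_cases h2 : 1 ≤ n ∧ allowed s v n ∧ v + ((n - 1 : ℕ) : ZMod (8 * s)) = w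
  · have h1 : v + (n : ℕ) = w + 1 := by
      rw [← h2.2.2, ← cast_pred_add_one s h2.1, ← add_assoc]
    rw [if_pos h1]
  · rw [if_neg h2, ite_self]

lemma rA5 (w1 w2 w3 w4 w5 : ZMod (8 * s)) :
    rA s K w1 * rA s K w2 * rA s K w3 * rA s K w4 * rA s K w5 = 0 := by
  refine LinearMap.ext fun f => funext fun v => funext fun n => ?_
  simp only [Module.End.mul_apply, rA_apply, LinearMap.zero_apply, Pi.zero_apply]
  split_ifs with h1 h2 h3 h4 h5 <;> try rfl
  exact absurd h5.1 (by have := h1.2.1.1; have := h1.1; omega)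

lemma rA_mul_rA_of_ne (w2 w3 : ZMod (8 * s)) (h : w2 ≠ w3 + 1) :
    rA s K w2 * rA s K w3 = 0 := by
  refine LinearMap.ext fun f => funext fun v => funext fun n => ?_
  simp only [Module.End.mul_apply, rA_apply, LinearMap.zero_apply, Pi.zero_apply]
  split_ifs with h1 h2 <;> try rfl
  exfalso
  obtain ⟨hn1, _, hw2⟩ := h1
  obtain ⟨hn2, _, hw3⟩ := h2
  exact h (by rw [← hw2, ← hw3, ← cast_pred_add_one s hn2, ← add_assoc])

lemma rA3_forbidden (w : ZMod (8 * s)) (h4 : 4 ∣ w.val) :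
    rA s K (w + 2) * (rA s K (w + 1) * rA s K w) = 0 := by
  refine LinearMap.ext fun f => funext fun v => funext fun n => ?_
  simp only [Module.End.mul_apply, rA_apply, LinearMap.zero_apply, Pi.zero_apply]
  split_ifs with h1 h2 h3 <;> try rfl
  exfalso
  have hn4 : n ≤ 4 := h1.2.1.1
  have hn1 : 1 ≤ n := h1.1
  have hn2 : 1 ≤ n - 1 := h2.1
  have hn3 : 1 ≤ n - 1 - 1 := h3.1
  refine h1.2.1.2 (n - 1 - 1 - 1) (by omega) (by omega) ?_
  rw [h3.2.2]; exact h4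

lemma rFree_e (i : ZMod (8 * s)) : rFree s K (ι K (Gen.e i)) = rE s K i := by
  simp [rFree, rGen]

lemma rFree_a (k : ZMod (6 * s)) : rFree s K (ι K (Gen.a k)) = rA s K (srcA s k) := by
  simp [rFree, rGen]

lemma rFree_g (t : ZMod (2 * s)) : rFree s K (ι K (Gen.g t)) = rA s K (srcG s t) := by
  simp [rFree, rGen]

lemma isArrow_rFree {x : FreeAlgebra K (Gen s)} (h : IsArrow s K x) :
    ∃ w, rFree s K x = rA s K w := by
  rcases h with ⟨k, rfl⟩ | ⟨t, rfl⟩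
  exacts [⟨_, rFree_a s K k⟩, ⟨_, rFree_g s K t⟩]

lemma s_ne_zero_zmod : ((s : ℕ) : ZMod (2 * s)) ≠ 0 := by
  intro h
  have hs := Nat.pos_of_ne_zero (NeZero.ne s)
  have hv : ((s : ℕ) : ZMod (2 * s)).val = s := ZMod.val_cast_of_lt (by omega)
  rw [h, ZMod.val_zero] at hv
  omega

lemma rFree_rel : ∀ ⦃x y⦄, Rel s K x y → rFree s K x = rFree s K y := by
  intro x y h
  induction h with
  | vertex_mul i j =>
      rw [map_mul, rFree_e, rFree_e, apply_ite (rFree s K), map_zero, rFree_e, rE_mul_rE]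
  | vertex_sum =>
      rw [map_sum, map_one]
      simp only [rFree_e]
      exact sum_rE s K
  | a_src k => rw [map_mul, rFree_a, rFree_e, rA_mul_rE]
  | a_tgt k =>
      rw [map_mul, rFree_a, rFree_e, show tgtA s k = srcA s k + 1 by
        rw [tgtA, srcA, Nat.cast_add, Nat.cast_one], rE_mul_rA]
  | g_src t => rw [map_mul, rFree_g, rFree_e, rA_mul_rE]
  | g_tgt t =>
      rw [map_mul, rFree_g, rFree_e, show tgtG s t = srcG s t + 1 by
        rw [tgtG, srcG, show 4 * (ZMod.val t + 1) = 4 * ZMod.val t + 3 + 1 by omega,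
          Nat.cast_add, Nat.cast_one], rE_mul_rA]
  | path5 x1 x2 x3 x4 x5 h1 h2 h3 h4 h5 =>
      obtain ⟨w1, hw1⟩ := isArrow_rFree s K h1
      obtain ⟨w2, hw2⟩ := isArrow_rFree s K h2
      obtain ⟨w3, hw3⟩ := isArrow_rFree s K h3
      obtain ⟨w4, hw4⟩ := isArrow_rFree s K h4
      obtain ⟨w5, hw5⟩ := isArrow_rFree s K h5
      rw [map_zero, map_mul, map_mul, map_mul, map_mul, hw1, hw2, hw3, hw4, hw5, rA5]
  | comm t =>
      have e0 : ((0 : ℕ) : ZMod (8 * s)) = 0 := Nat.cast_zero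
      have key : ∀ u : ZMod (2 * s),
          rFree s K (ι K (Gen.a (ai s u 2)) * (ι K (Gen.a (ai s u 1)) * ι K (Gen.a (ai s u 0)))) = 0 := by
        intro u
        rw [map_mul, map_mul, rFree_a, rFree_a, rFree_a, srcA_ai s u 2 (by omega),
          srcA_ai s u 1 (by omega), srcA_ai s u 0 (by omega), e0, add_zero,
          Nat.cast_one, Nat.cast_two]
        exact rA3_forbidden s K _ ⟨u.val, by rw [val_w]⟩
      rw [key t, key (t + (s : ZMod (2 * s)))]
  | zero_rel t =>
      rw [map_zero, map_mul, map_mul, rFree_a, rFree_g, rFree_a]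
      have key : srcG s (t - 1) ≠ srcA s (ai s (t + (s : ZMod (2 * s)) - 1) 2) + 1 := by
        rw [srcA_ai s _ 2 (by omega)]
        set b := (t + (s : ZMod (2 * s)) - 1).val with hb
        intro h
        have hbv : b < 2 * s := ZMod.val_lt _
        have hav : (t - 1).val < 2 * s := ZMod.val_lt _
        have h' : ((4 * (t - 1).val + 3 : ℕ) : ZMod (8 * s)) = ((4 * b + 3 : ℕ) : ZMod (8 * s)) := by
          rw [srcG] at h
          rw [h]
          push_cast
          ring
        have := natCast_inj8 s (by omega) (by omega) h'
        have hval : (t - 1) = (t + (s : ZMod (2 * s)) - 1) := by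
          apply ZMod.val_injective
          omega
        have : t + (s : ZMod (2 * s)) = t := by linear_combination -hval
        exact s_ne_zero_zmod s (by linear_combination this)
      rw [rA_mul_rA_of_ne s K _ _ key, mul_zero]

/-- The representation of `R'_s`. -/
noncomputable def rho : Rp s K →ₐ[K] Module.End K (M s K) :=
  RingQuot.liftAlgHom K ⟨rFree s K, rFree_rel s K⟩

lemma v_cast_val (v : ZMod (8 * s)) : ((v.val : ℕ) : ZMod (8 * s)) = v :=
  ZMod.natCast_rightInverse v

/-- The generator of the unique arrow with source `v`. -/
def arrowAt (v : ZMod (8 * s)) : Gen s :=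
  if v.val % 4 = 3 then Gen.g ((v.val / 4 : ℕ) : ZMod (2 * s))
  else Gen.a ((3 * (v.val / 4) + v.val % 4 : ℕ) : ZMod (6 * s))

/-- The arrow with source `v`, in `R'_s`. -/
noncomputable def Ar (v : ZMod (8 * s)) : Rp s K :=
  RingQuot.mkAlgHom K (Rel s K) (ι K (arrowAt s v))

lemma isArrow_arrowAt (v : ZMod (8 * s)) : IsArrow s K (ι K (arrowAt s v)) := by
  unfold arrowAt; split_ifs
  exacts [Or.inr ⟨_, rfl⟩, Or.inl ⟨_, rfl⟩]

lemma arrowAt_cases (v : ZMod (8 * s)) :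
    (∃ t : ZMod (2 * s), arrowAt s v = Gen.g t ∧ srcG s t = v ∧ tgtG s t = v + 1) ∨
    (∃ k : ZMod (6 * s), arrowAt s v = Gen.a k ∧ srcA s k = v ∧ tgtA s k = v + 1) := by
  have hv8 := ZMod.val_lt v
  by_cases hv : v.val % 4 = 3
  · left
    refine ⟨_, by rw [arrowAt, if_pos hv], ?_, ?_⟩
    · rw [srcG, ZMod.val_cast_of_lt (show v.val / 4 < 2 * s by omega),
        show 4 * (v.val / 4) + 3 = v.val from by omega, v_cast_val]
    · rw [tgtG, ZMod.val_cast_of_lt (show v.val / 4 < 2 * s by omega),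
        show 4 * (v.val / 4 + 1) = v.val + 1 from by omega, Nat.cast_add, Nat.cast_one,
        v_cast_val]
  · right
    have hr : v.val % 4 < 3 := by omega
    have hk : (((3 * (v.val / 4) + v.val % 4 : ℕ) : ZMod (6 * s))).val
        = 3 * (v.val / 4) + v.val % 4 := ZMod.val_cast_of_lt (by omega)
    refine ⟨_, by rw [arrowAt, if_neg hv], ?_, ?_⟩
    · rw [srcA, hk, show 4 * ((3 * (v.val / 4) + v.val % 4) / 3) + (3 * (v.val / 4) + v.val % 4) % 3
        = v.val from by omega, v_cast_val]
    · rw [tgtA, hk, show 4 * ((3 * (v.val / 4) + v.val % 4) / 3) + (3 * (v.val / 4) + v.val % 4) % 3 + 1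
        = v.val + 1 from by omega, Nat.cast_add, Nat.cast_one, v_cast_val]

lemma Ar_srcA (k : ZMod (6 * s)) :
    Ar s K (srcA s k) = RingQuot.mkAlgHom K (Rel s K) (ι K (Gen.a k)) := by
  have hk6 := ZMod.val_lt k
  have hval : (srcA s k).val = 4 * (k.val / 3) + k.val % 3 :=
    ZMod.val_cast_of_lt (by omega)
  have hidx : ((3 * ((4 * (k.val / 3) + k.val % 3) / 4) + (4 * (k.val / 3) + k.val % 3) % 4 : ℕ) :
      ZMod (6 * s)) = k := by
    rw [show 3 * ((4 * (k.val / 3) + k.val % 3) / 4) + (4 * (k.val / 3) + k.val % 3) % 4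
      = k.val from by omega]
    exact ZMod.natCast_rightInverse k
  rw [Ar, arrowAt, hval, if_neg (by omega), hidx]

lemma Ar_srcG (t : ZMod (2 * s)) :
    Ar s K (srcG s t) = RingQuot.mkAlgHom K (Rel s K) (ι K (Gen.g t)) := by
  have ht2 := ZMod.val_lt t
  have hval : (srcG s t).val = 4 * t.val + 3 := ZMod.val_cast_of_lt (by omega)
  have hidx : (((4 * t.val + 3) / 4 : ℕ) : ZMod (2 * s)) = t := by
    rw [show (4 * t.val + 3) / 4 = t.val from by omega]
    exact ZMod.natCast_rightInverse t
  rw [Ar, arrowAt, hval, if_pos (by omega), hidx]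

lemma E_mul_E (i j : ZMod (8 * s)) :
    eIdem s K i * eIdem s K j = if i = j then eIdem s K i else 0 := by
  have h := RingQuot.mkAlgHom_rel K (Rel.vertex_mul (s := s) (K := K) i j)
  rw [map_mul] at h
  show RingQuot.mkAlgHom K (Rel s K) (ι K (Gen.e i)) * RingQuot.mkAlgHom K (Rel s K) (ι K (Gen.e j)) = _
  rw [h, apply_ite (RingQuot.mkAlgHom K (Rel s K)), map_zero]
  rfl

lemma sum_E : ∑ i, eIdem s K i = 1 := by
  have h := RingQuot.mkAlgHom_rel K (Rel.vertex_sum (s := s) (K := K))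
  rw [map_sum, map_one] at h
  simpa [eIdem] using h

lemma Ar_src (v : ZMod (8 * s)) : Ar s K v * eIdem s K v = Ar s K v := by
  rcases arrowAt_cases s v with ⟨t, ht, hsrc, -⟩ | ⟨k, hk, hsrc, -⟩
  · have h := RingQuot.mkAlgHom_rel K (Rel.g_src (s := s) (K := K) t)
    rw [map_mul] at h
    rw [Ar, ht, eIdem, ← hsrc, h]
  · have h := RingQuot.mkAlgHom_rel K (Rel.a_src (s := s) (K := K) k)
    rw [map_mul] at h
    rw [Ar, hk, eIdem, ← hsrc, h]

lemma Ar_tgt (v : ZMod (8 * s)) : eIdem s K (v + 1) * Ar s K v = Ar s K v := by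
  rcases arrowAt_cases s v with ⟨t, ht, -, htgt⟩ | ⟨k, hk, -, htgt⟩
  · have h := RingQuot.mkAlgHom_rel K (Rel.g_tgt (s := s) (K := K) t)
    rw [map_mul] at h
    rw [Ar, ht, eIdem, ← htgt, h]
  · have h := RingQuot.mkAlgHom_rel K (Rel.a_tgt (s := s) (K := K) k)
    rw [map_mul] at h
    rw [Ar, hk, eIdem, ← htgt, h]

lemma E_Ar (i v : ZMod (8 * s)) :
    eIdem s K i * Ar s K v = if i = v + 1 then Ar s K v else 0 := by
  conv_lhs => rw [← Ar_tgt s K v]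
  rw [← mul_assoc, E_mul_E, ite_mul, zero_mul]
  split_ifs with h
  · rw [h, Ar_tgt]
  · rfl

lemma Ar_E (v i : ZMod (8 * s)) :
    Ar s K v * eIdem s K i = if v = i then Ar s K v else 0 := by
  conv_lhs => rw [← Ar_src s K v]
  rw [mul_assoc, E_mul_E, mul_ite, mul_zero, Ar_src]

/-- The path of length `n` starting at `v`, in `R'_s`. -/
noncomputable def Path (v : ZMod (8 * s)) : ℕ → Rp s K
  | 0 => eIdem s K v
  | n + 1 => Ar s K (v + (n : ℕ)) * Path v n

lemma Path_one (v : ZMod (8 * s)) : Path s K v 1 = Ar s K v := by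
  show Ar s K (v + ((0 : ℕ) : ZMod (8 * s))) * eIdem s K v = Ar s K v
  rw [Nat.cast_zero, add_zero, Ar_src]

lemma E_mul_Path (i v : ZMod (8 * s)) (n : ℕ) :
    eIdem s K i * Path s K v n = if i = v + (n : ℕ) then Path s K v n else 0 := by
  induction n with
  | zero =>
      show eIdem s K i * eIdem s K v = if i = v + ((0 : ℕ) : ZMod (8 * s)) then eIdem s K v else 0
      rw [Nat.cast_zero, add_zero, E_mul_E]
      split_ifs with h
      · rw [h]
      · rfl
  | succ n ih =>
      show eIdem s K i * (Ar s K (v + (n : ℕ)) * Path s K v n) = _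
      rw [← mul_assoc, E_Ar, ite_mul, zero_mul]
      rw [show v + ((n + 1 : ℕ) : ZMod (8 * s)) = v + (n : ℕ) + 1 by push_cast; ring]
      rfl

lemma Path_mul_E (v : ZMod (8 * s)) (n : ℕ) (i : ZMod (8 * s)) :
    Path s K v n * eIdem s K i = if v = i then Path s K v n else 0 := by
  induction n with
  | zero => exact E_mul_E s K v i
  | succ n ih =>
      show (Ar s K (v + (n : ℕ)) * Path s K v n) * eIdem s K i = _
      rw [mul_assoc, ih, mul_ite, mul_zero]
      rfl

lemma Ar_mul_Path (w v : ZMod (8 * s)) (n : ℕ) :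
    Ar s K w * Path s K v n = if w = v + (n : ℕ) then Path s K v (n + 1) else 0 := by
  conv_lhs => rw [show Path s K v n = eIdem s K (v + (n : ℕ)) * Path s K v n from
    ((E_mul_Path s K _ v n).trans (if_pos rfl)).symm]
  rw [← mul_assoc, Ar_E, ite_mul, zero_mul]
  split_ifs with h
  · rw [h]; rfl
  · rfl

lemma Path_mul_Path (w : ZMod (8 * s)) (m : ℕ) (v : ZMod (8 * s)) (n : ℕ) :
    Path s K w m * Path s K v n = if w = v + (n : ℕ) then Path s K v (m + n) else 0 := by
  induction m with
  | zero => rw [Nat.zero_add]; exact E_mul_Path s K w v n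
  | succ m ih =>
      show (Ar s K (w + (m : ℕ)) * Path s K w m) * Path s K v n = _
      rw [mul_assoc, ih, mul_ite, mul_zero]
      split_ifs with h
      · subst h
        rw [Ar_mul_Path, if_pos (by push_cast; ring), show m + n + 1 = m + 1 + n from by omega]
      · rfl

lemma Path_five (v : ZMod (8 * s)) : Path s K v 5 = 0 := by
  have h := RingQuot.mkAlgHom_rel K (Rel.path5 (s := s) (K := K)
    (ι K (arrowAt s (v + ((4 : ℕ) : ZMod (8 * s))))) (ι K (arrowAt s (v + ((3 : ℕ) : ZMod (8 * s)))))
    (ι K (arrowAt s (v + ((2 : ℕ) : ZMod (8 * s))))) (ι K (arrowAt s (v + ((1 : ℕ) : ZMod (8 * s)))))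
    (ι K (arrowAt s (v + ((0 : ℕ) : ZMod (8 * s)))))
    (isArrow_arrowAt s K _) (isArrow_arrowAt s K _) (isArrow_arrowAt s K _)
    (isArrow_arrowAt s K _) (isArrow_arrowAt s K _))
  rw [map_zero, map_mul, map_mul, map_mul, map_mul] at h
  have e : Path s K v 5 = Ar s K (v + ((4 : ℕ) : ZMod (8 * s))) *
      (Ar s K (v + ((3 : ℕ) : ZMod (8 * s))) * (Ar s K (v + ((2 : ℕ) : ZMod (8 * s))) *
      (Ar s K (v + ((1 : ℕ) : ZMod (8 * s))) * (Ar s K (v + ((0 : ℕ) : ZMod (8 * s))) *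
      eIdem s K v)))) := rfl
  rw [e]
  simp only [Ar, ← mul_assoc]
  rw [h, zero_mul]

lemma Path_zero_of_five_le (v : ZMod (8 * s)) (n : ℕ) (hn : 5 ≤ n) : Path s K v n = 0 := by
  obtain ⟨m, rfl⟩ : ∃ m, n = m + 5 := ⟨n - 5, by omega⟩
  have h2 := Path_mul_Path s K (v + ((5 : ℕ) : ZMod (8 * s))) m v 5
  rw [if_pos rfl, Path_five, mul_zero] at h2
  exact h2.symm

lemma Path_three_forbidden (v : ZMod (8 * s)) (h4 : 4 ∣ v.val) : Path s K v 3 = 0 := by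
  have hv8 := ZMod.val_lt v
  set t : ZMod (2 * s) := ((v.val / 4 : ℕ) : ZMod (2 * s)) with htdef
  have ht : t.val = v.val / 4 := ZMod.val_cast_of_lt (by omega)
  have hvj : ∀ j : ℕ, j < 3 → (v + (j : ℕ)).val = v.val + j := by
    intro j hj
    rw [show v + (j : ℕ) = ((v.val + j : ℕ) : ZMod (8 * s)) by rw [Nat.cast_add, v_cast_val]]
    exact ZMod.val_cast_of_lt (by omega)
  have harr : ∀ j : ℕ, j < 3 → Ar s K (v + (j : ℕ)) =
      RingQuot.mkAlgHom K (Rel s K) (ι K (Gen.a (ai s t j))) := by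
    intro j hj
    have hidx : ((3 * ((v.val + j) / 4) + (v.val + j) % 4 : ℕ) : ZMod (6 * s)) = ai s t j := by
      rw [ai, ht]
      congr 1
      omega
    rw [Ar, arrowAt, hvj j hj, if_neg (by omega), hidx]
  have hcomm := RingQuot.mkAlgHom_rel K (Rel.comm (s := s) (K := K) t)
  rw [map_mul, map_mul, map_mul, map_mul] at hcomm
  set t' : ZMod (2 * s) := t + (s : ZMod (2 * s)) with ht'def
  have htt' : t ≠ t' := by
    intro h
    exact s_ne_zero_zmod s (by linear_combination -h)
  have ht'2 := ZMod.val_lt t'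
  -- E (v+3) kills the right-hand side
  have hkill : eIdem s K (v + ((3 : ℕ) : ZMod (8 * s))) *
      RingQuot.mkAlgHom K (Rel s K) (ι K (Gen.a (ai s t' 2))) = 0 := by
    rw [← Ar_srcA, E_Ar, if_neg ?_]
    rw [srcA_ai s t' 2 (by omega)]
    intro h
    have h' : ((v.val + 3 : ℕ) : ZMod (8 * s)) = ((4 * t'.val + 3 : ℕ) : ZMod (8 * s)) := by
      rw [Nat.cast_add]
      rw [show ((4 * t'.val + 3 : ℕ) : ZMod (8 * s)) = ((4 * t'.val : ℕ) : ZMod (8 * s)) + ((2:ℕ):ZMod (8*s)) + 1 by push_cast; ring]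
      rw [v_cast_val]
      exact_mod_cast h
    have heq := natCast_inj8 s (by omega) (by have := ZMod.val_lt t'; omega) h'
    have : t.val = t'.val := by omega
    exact htt' (ZMod.val_injective _ this)
  -- hence the left-hand side is zero
  have hL : RingQuot.mkAlgHom K (Rel s K) (ι K (Gen.a (ai s t 2))) *
      (RingQuot.mkAlgHom K (Rel s K) (ι K (Gen.a (ai s t 1))) *
       RingQuot.mkAlgHom K (Rel s K) (ι K (Gen.a (ai s t 0)))) = 0 := by
    have htgt : eIdem s K (v + ((3 : ℕ) : ZMod (8 * s))) *
        RingQuot.mkAlgHom K (Rel s K) (ι K (Gen.a (ai s t 2))) =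
        RingQuot.mkAlgHom K (Rel s K) (ι K (Gen.a (ai s t 2))) := by
      rw [← harr 2 (by omega), E_Ar, if_pos (by push_cast; ring)]
    calc RingQuot.mkAlgHom K (Rel s K) (ι K (Gen.a (ai s t 2))) *
          (RingQuot.mkAlgHom K (Rel s K) (ι K (Gen.a (ai s t 1))) *
           RingQuot.mkAlgHom K (Rel s K) (ι K (Gen.a (ai s t 0))))
        = eIdem s K (v + ((3 : ℕ) : ZMod (8 * s))) * (RingQuot.mkAlgHom K (Rel s K) (ι K (Gen.a (ai s t 2))) *
            (RingQuot.mkAlgHom K (Rel s K) (ι K (Gen.a (ai s t 1))) *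
             RingQuot.mkAlgHom K (Rel s K) (ι K (Gen.a (ai s t 0))))) := by
          conv_rhs => rw [← mul_assoc, htgt]
      _ = (eIdem s K (v + ((3 : ℕ) : ZMod (8 * s))) *
            RingQuot.mkAlgHom K (Rel s K) (ι K (Gen.a (ai s t' 2)))) *
            (RingQuot.mkAlgHom K (Rel s K) (ι K (Gen.a (ai s t' 1))) *
             RingQuot.mkAlgHom K (Rel s K) (ι K (Gen.a (ai s t' 0)))) := by
          rw [hcomm, ← mul_assoc]
      _ = 0 := by rw [hkill, zero_mul]
  show Ar s K (v + ((2 : ℕ) : ZMod (8 * s))) * (Ar s K (v + ((1 : ℕ) : ZMod (8 * s))) *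
      (Ar s K (v + ((0 : ℕ) : ZMod (8 * s))) * eIdem s K v)) = 0
  have hL2 : RingQuot.mkAlgHom K (Rel s K) (ι K (Gen.a (ai s t 2))) *
      RingQuot.mkAlgHom K (Rel s K) (ι K (Gen.a (ai s t 1))) *
      RingQuot.mkAlgHom K (Rel s K) (ι K (Gen.a (ai s t 0))) = 0 := by
    rw [mul_assoc]; exact hL
  rw [harr 2 (by omega), harr 1 (by omega), harr 0 (by omega), ← mul_assoc, ← mul_assoc,
    hL2, zero_mul]

lemma Path_forbidden (v : ZMod (8 * s)) (n j : ℕ) (hj3 : j + 3 ≤ n)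
    (h4 : 4 ∣ (v + (j : ℕ)).val) : Path s K v n = 0 := by
  have h3 : Path s K (v + (j : ℕ)) 3 = 0 := Path_three_forbidden s K _ h4
  have h1 := Path_mul_Path s K (v + (j : ℕ)) 3 v j
  rw [if_pos rfl, h3, zero_mul, Nat.add_comm 3 j] at h1
  have h2 := Path_mul_Path s K (v + ((j + 3 : ℕ) : ZMod (8 * s))) (n - (j + 3)) v (j + 3)
  rw [if_pos rfl, ← h1, mul_zero, show n - (j + 3) + (j + 3) = n from by omega] at h2
  exact h2.symm

/-- The family of candidate basis paths. -/
noncomputable def pathFam (p : ZMod (8 * s) × Fin 5) : Rp s K := Path s K p.1 (p.2 : ℕ)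

lemma path_mem_span (v : ZMod (8 * s)) (n : ℕ) :
    Path s K v n ∈ Submodule.span K (Set.range (pathFam s K)) := by
  by_cases hn : n ≤ 4
  · exact Submodule.subset_span ⟨(v, ⟨n, by omega⟩), rfl⟩
  · rw [Path_zero_of_five_le s K v n (by omega)]
    exact zero_mem _

lemma one_mem_span : (1 : Rp s K) ∈ Submodule.span K (Set.range (pathFam s K)) := by
  rw [← sum_E s K]
  exact Submodule.sum_mem _ fun i _ => path_mem_span s K i 0

lemma mul_mem_span (x y : Rp s K)
    (hx : x ∈ Submodule.span K (Set.range (pathFam s K)))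
    (hy : y ∈ Submodule.span K (Set.range (pathFam s K))) :
    x * y ∈ Submodule.span K (Set.range (pathFam s K)) := by
  induction hx using Submodule.span_induction with
  | mem a ha =>
      induction hy using Submodule.span_induction with
      | mem b hb =>
          obtain ⟨⟨w, m⟩, rfl⟩ := ha
          obtain ⟨⟨v, n⟩, rfl⟩ := hb
          show Path s K w (m : ℕ) * Path s K v (n : ℕ) ∈ _
          rw [Path_mul_Path]
          split_ifs
          · exact path_mem_span s K v _
          · exact zero_mem _
      | zero => rw [mul_zero]; exact zero_mem _
      | add b c _ _ hb hc => rw [mul_add]; exact add_mem hb hc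
      | smul r b _ hb => rw [mul_smul_comm]; exact Submodule.smul_mem _ r hb
  | zero => rw [zero_mul]; exact zero_mem _
  | add a b _ _ ha hb => rw [add_mul]; exact add_mem ha hb
  | smul r a _ ha => rw [smul_mul_assoc]; exact Submodule.smul_mem _ r ha

lemma top_le_span :
    (⊤ : Submodule K (Rp s K)) ≤ Submodule.span K (Set.range (pathFam s K)) := by
  intro x hx
  clear hx
  obtain ⟨y, rfl⟩ := RingQuot.mkAlgHom_surjective K (Rel s K) x
  induction y using FreeAlgebra.induction with
  | grade0 r =>
      rw [AlgHom.commutes, Algebra.algebraMap_eq_smul_one]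
      exact Submodule.smul_mem _ r (one_mem_span s K)
  | grade1 g =>
      cases g with
      | e i => exact path_mem_span s K i 0
      | a k =>
          show RingQuot.mkAlgHom K (Rel s K) (ι K (Gen.a k)) ∈ _
          rw [← Ar_srcA, ← Path_one]
          exact path_mem_span s K _ 1
      | g t =>
          show RingQuot.mkAlgHom K (Rel s K) (ι K (Gen.g t)) ∈ _
          rw [← Ar_srcG, ← Path_one]
          exact path_mem_span s K _ 1
  | mul a b ha hb =>
      rw [map_mul]
      exact mul_mem_span s K _ _ ha hb
  | add a b ha hb =>
      rw [map_add]
      exact add_mem ha hb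

/-- The vector of "empty paths". -/
def delta0 : M s K := fun _ n => if n = 0 then 1 else 0

lemma rho_E (i : ZMod (8 * s)) : rho s K (eIdem s K i) = rE s K i := by
  rw [eIdem, rho, RingQuot.liftAlgHom_mkAlgHom_apply, rFree_e]

lemma rho_Ar (u : ZMod (8 * s)) : rho s K (Ar s K u) = rA s K u := by
  rw [Ar, rho, RingQuot.liftAlgHom_mkAlgHom_apply]
  rcases arrowAt_cases s u with ⟨t, ht, hsrc, -⟩ | ⟨k, hk, hsrc, -⟩
  · rw [ht, rFree_g, hsrc]
  · rw [hk, rFree_a, hsrc]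

lemma rho_Path (v : ZMod (8 * s)) (n : ℕ) :
    rho s K (Path s K v n) (delta0 s K) =
      fun w m => if w = v ∧ m = n ∧ allowed s v n then 1 else 0 := by
  induction n with
  | zero =>
      funext w m
      show rho s K (eIdem s K v) (delta0 s K) w m = _
      rw [rho_E, rE_apply]
      by_cases hm : m = 0
      · subst hm
        simp [delta0, allowed_zero s v]
      · simp [delta0, hm]
  | succ n ih =>
      funext w m
      show rho s K (Ar s K (v + (n : ℕ)) * Path s K v n) (delta0 s K) w m = _
      rw [map_mul, Module.End.mul_apply, rho_Ar]
      rw [rA_apply]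
      by_cases hr : w = v ∧ m = n + 1 ∧ allowed s v (n + 1)
      · obtain ⟨rfl, rfl, hal⟩ := hr
        rw [if_pos (⟨by omega, hal, rfl⟩ :
            1 ≤ n + 1 ∧ allowed s w (n + 1) ∧ w + ((n + 1 - 1 : ℕ) : ZMod (8 * s)) = w + (n : ℕ))]
        simp only [ih]
        simp [Nat.add_sub_cancel, allowed_succ s hal, hal]
      · rw [if_neg hr]
        by_cases h1 : 1 ≤ m ∧ allowed s w m ∧ w + ((m - 1 : ℕ) : ZMod (8 * s)) = v + (n : ℕ)
        · rw [if_pos h1]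
          simp only [ih]
          rw [if_neg ?_]
          rintro ⟨rfl, h2, -⟩
          have hm : m = n + 1 := by omega
          exact hr ⟨rfl, hm, hm ▸ h1.2.1⟩
        · rw [if_neg h1]

/-- The coefficient functional reading off the coordinate of the basis path `(v, n)`. -/
noncomputable def coeff (v : ZMod (8 * s)) (n : ℕ) : Rp s K →ₗ[K] K where
  toFun z := rho s K z (delta0 s K) v n
  map_add' x y := by
    rw [map_add, LinearMap.add_apply]
    rfl
  map_smul' c x := by
    rw [map_smul, LinearMap.smul_apply]
    rfl

lemma coeff_apply (v : ZMod (8 * s)) (n : ℕ) (z : Rp s K) :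
    coeff s K v n z = rho s K z (delta0 s K) v n := rfl

lemma coeff_Path (w : ZMod (8 * s)) (m : ℕ) (v : ZMod (8 * s)) (n : ℕ) :
    coeff s K w m (Path s K v n) =
      if w = v ∧ m = n ∧ allowed s v n then 1 else 0 := by
  rw [coeff_apply, rho_Path]

lemma coeff_E_mul (i : ZMod (8 * s)) (x : Rp s K) (w : ZMod (8 * s)) (m : ℕ) :
    coeff s K w m (eIdem s K i * x) =
      if w + (m : ℕ) = i then coeff s K w m x else 0 := by
  rw [coeff_apply, map_mul, Module.End.mul_apply, rho_E, rE_apply, coeff_apply]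

lemma one_ne_zero' : (1 : Rp s K) ≠ 0 := by
  intro h
  have h2 := congrArg (fun z => rho s K z (delta0 s K) 0 0) h
  simp only [map_one, map_zero, Module.End.one_apply, LinearMap.zero_apply] at h2
  rw [show delta0 s K 0 0 = 1 from rfl] at h2
  exact one_ne_zero (h2.trans rfl)

instance : Nontrivial (Rp s K) := ⟨1, 0, one_ne_zero' s K⟩

lemma cast_fin_ne_zero (m : ℕ) (hm : m ≤ 4) (h0 : m ≠ 0) :
    ((m : ℕ) : ZMod (8 * s)) ≠ 0 := by
  intro h
  have hs1 := Nat.pos_of_ne_zero (NeZero.ne s)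
  have := ZMod.val_cast_of_lt (show m < 8 * s by omega)
  rw [h, ZMod.val_zero] at this
  omega

theorem center_le_bot : Subalgebra.center K (Rp s K) ≤ ⊥ := by
  intro z hz
  rw [Subalgebra.mem_center_iff] at hz
  obtain ⟨c, hc⟩ := (Submodule.mem_span_range_iff_exists_fun K).mp
    (top_le_span s K (Submodule.mem_top (x := z)))
  -- hc : ∑ p, c p • pathFam s K p = z
  -- Step I: coefficients of positive-length allowed paths vanish
  have hpos : ∀ (v : ZMod (8 * s)) (mf : Fin 5), (mf : ℕ) ≠ 0 → allowed s v (mf : ℕ) →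
      c (v, mf) = 0 := by
    intro v mf hm0 hal
    have hE := hz (eIdem s K v)
    -- coeff v mf of LHS (eIdem v * z) is 0
    have hL : coeff s K v (mf : ℕ) (eIdem s K v * z) = 0 := by
      rw [coeff_E_mul, if_neg ?_]
      intro h
      exact cast_fin_ne_zero s (mf : ℕ) (by omega) hm0 (by
        have := add_left_cancel (a := v) (b := ((mf : ℕ) : ZMod (8 * s))) (c := 0)
        exact this (by rw [add_zero]; exact h))
    -- coeff v mf of RHS (z * eIdem v) is c (v, mf)
    have hrw : z * eIdem s K v =
        ∑ p : ZMod (8 * s) × Fin 5, c p • (if p.1 = v then Path s K p.1 (p.2 : ℕ) else 0) := by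
      rw [← hc, Finset.sum_mul]
      exact Finset.sum_congr rfl fun p _ => by
        rw [smul_mul_assoc, pathFam, Path_mul_E]
    have hR : coeff s K v (mf : ℕ) (z * eIdem s K v) = c (v, mf) := by
      rw [hrw, map_sum]
      have hterm : ∀ p : ZMod (8 * s) × Fin 5,
          coeff s K v (mf : ℕ) (c p • (if p.1 = v then Path s K p.1 (p.2 : ℕ) else 0)) =
          if p = (v, mf) then c p else 0 := by
        intro p
        rw [map_smul, apply_ite (coeff s K v (mf : ℕ)), map_zero, coeff_Path]
        by_cases hp : p = (v, mf)
        · subst hp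
          rw [if_pos rfl, if_pos rfl, if_pos ⟨rfl, rfl, hal⟩]
          simp
        · rw [if_neg hp]
          by_cases hp1 : p.1 = v
          · rw [if_pos hp1, if_neg ?_]
            · simp
            rintro ⟨h1, h2, -⟩
            exact hp (Prod.ext h1.symm (Fin.val_injective h2.symm))
          · rw [if_neg hp1]
            simp
      rw [Finset.sum_congr rfl fun p _ => hterm p, Finset.sum_ite_eq' Finset.univ (v, mf) c,
        if_pos (Finset.mem_univ _)]
    rw [← hL, hE, hR]
  -- Step II: all vertex coefficients agree
  have hstep : ∀ u : ZMod (8 * s), c (u, 0) = c (u + 1, 0) := by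
    intro u
    have hA := hz (Ar s K u)
    have hal1 : allowed s u 1 := allowed_one s u
    -- coeff u 1 of (Ar u * z) is c (u, 0)
    have hrwL : Ar s K u * z =
        ∑ p : ZMod (8 * s) × Fin 5,
          c p • (if u = p.1 + ((p.2 : ℕ) : ZMod (8 * s)) then Path s K p.1 ((p.2 : ℕ) + 1) else 0) := by
      rw [← hc, Finset.mul_sum]
      exact Finset.sum_congr rfl fun p _ => by
        rw [mul_smul_comm, pathFam, Ar_mul_Path]
    have hL : coeff s K u 1 (Ar s K u * z) = c (u, 0) := by
      rw [hrwL, map_sum]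
      have hterm : ∀ p : ZMod (8 * s) × Fin 5,
          coeff s K u 1 (c p • (if u = p.1 + ((p.2 : ℕ) : ZMod (8 * s)) then Path s K p.1 ((p.2 : ℕ) + 1) else 0)) =
          if p = (u, 0) then c p else 0 := by
        intro p
        rw [map_smul, apply_ite (coeff s K u 1), map_zero, coeff_Path]
        by_cases hp : p = (u, 0)
        · subst hp
          rw [if_pos (by rw [Fin.val_zero, Nat.cast_zero, add_zero]),
            if_pos ⟨rfl, by rw [Fin.val_zero], by rw [Fin.val_zero]; exact allowed_one s _⟩]
          simp
        · by_cases hout : u = p.1 + ((p.2 : ℕ) : ZMod (8 * s))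
          · rw [if_pos hout, if_neg ?_, if_neg hp]
            · simp
            rintro ⟨h1, h2, -⟩
            have hp2 : p.2 = 0 := by
              have : (p.2 : ℕ) = 0 := by omega
              exact Fin.ext this
            exact hp (Prod.ext h1.symm hp2)
          · rw [if_neg hout, if_neg hp]
            simp
      rw [Finset.sum_congr rfl fun p _ => hterm p, Finset.sum_ite_eq' Finset.univ (u, 0) c,
        if_pos (Finset.mem_univ _)]
    -- coeff u 1 of (z * Ar u) is c (u + 1, 0)
    have hrwR : z * Ar s K u =
        ∑ p : ZMod (8 * s) × Fin 5,
          c p • (if p.1 = u + 1 then Path s K u ((p.2 : ℕ) + 1) else 0) := by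
      rw [← hc, Finset.sum_mul]
      refine Finset.sum_congr rfl fun p _ => by
        rw [smul_mul_assoc, pathFam, ← Path_one, Path_mul_Path, Nat.cast_one]
    have hR : coeff s K u 1 (z * Ar s K u) = c (u + 1, 0) := by
      rw [hrwR, map_sum]
      have hterm : ∀ p : ZMod (8 * s) × Fin 5,
          coeff s K u 1 (c p • (if p.1 = u + 1 then Path s K u ((p.2 : ℕ) + 1) else 0)) =
          if p = (u + 1, 0) then c p else 0 := by
        intro p
        rw [map_smul, apply_ite (coeff s K u 1), map_zero, coeff_Path]
        by_cases hp : p = (u + 1, 0)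
        · subst hp
          rw [if_pos rfl, if_pos ⟨rfl, by rw [Fin.val_zero], by rw [Fin.val_zero]; exact allowed_one s _⟩]
          simp
        · by_cases hout : p.1 = u + 1
          · rw [if_pos hout, if_neg ?_, if_neg hp]
            · simp
            rintro ⟨-, h2, -⟩
            have hp2 : p.2 = 0 := by
              have : (p.2 : ℕ) = 0 := by omega
              exact Fin.ext this
            exact hp (Prod.ext hout hp2)
          · rw [if_neg hout, if_neg hp]
            simp
      rw [Finset.sum_congr rfl fun p _ => hterm p, Finset.sum_ite_eq' Finset.univ (u + 1, 0) c,
        if_pos (Finset.mem_univ _)]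
    rw [← hL, hA, hR]
  -- all vertex coefficients are equal to κ
  set κ := c (0, 0) with hκ
  have hnat : ∀ m : ℕ, c (((m : ℕ) : ZMod (8 * s)), 0) = κ := by
    intro m
    induction m with
    | zero => rw [Nat.cast_zero]
    | succ m ih => rw [Nat.cast_add, Nat.cast_one, ← hstep, ih]
  have hconst : ∀ u : ZMod (8 * s), c (u, 0) = κ := fun u => by
    rw [← v_cast_val s u]; exact hnat u.val
  -- conclude
  have hterm : ∀ p : ZMod (8 * s) × Fin 5,
      c p • pathFam s K p = if p.2 = 0 then κ • eIdem s K p.1 else 0 := by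
    rintro ⟨v, mf⟩
    by_cases h0 : mf = 0
    · subst h0
      rw [if_pos rfl]
      show c (v, 0) • Path s K v ((0 : Fin 5) : ℕ) = κ • eIdem s K v
      rw [hconst v, Fin.val_zero]
      rfl
    · rw [if_neg h0]
      show c (v, mf) • Path s K v (mf : ℕ) = 0
      by_cases hal : allowed s v (mf : ℕ)
      · rw [hpos v mf (fun h => h0 (Fin.ext h)) hal, zero_smul]
      · have hle : (mf : ℕ) ≤ 4 := by omega
        rw [allowed] at hal
        push_neg at hal
        obtain ⟨j, hj2, hj3, hdvd⟩ := hal hle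
        rw [Path_forbidden s K v (mf : ℕ) j hj3 hdvd, smul_zero]
  have hz1 : z = κ • (1 : Rp s K) := by
    rw [← hc, Finset.sum_congr rfl fun p _ => hterm p, ← sum_E s K, Finset.smul_sum]
    rw [Fintype.sum_prod_type]
    refine Finset.sum_congr rfl fun v _ => ?_
    rw [Finset.sum_ite_eq' Finset.univ (0 : Fin 5) (fun _ => κ • eIdem s K v),
      if_pos (Finset.mem_univ _)]
  rw [Algebra.mem_bot]
  exact ⟨κ, by rw [Algebra.algebraMap_eq_smul_one, ← hz1]⟩

instance : NoZeroSMulDivisors K (Rp s K) := by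
  refine ⟨fun {c x} h => ?_⟩
  rcases eq_or_ne c 0 with rfl | hc
  · exact Or.inl rfl
  · refine Or.inr ?_
    calc x = c⁻¹ • (c • x) := by rw [smul_smul, inv_mul_cancel₀ hc, one_smul]
    _ = 0 := by rw [h, smul_zero]

theorem center_eq_bot : Subalgebra.center K (Rp s K) = ⊥ :=
  le_antisymm (center_le_bot s K) bot_le

end Aux
end E6

/-- For `s > 1`, the center of the algebra `R'ₛ` of tree class `E₆` is one-dimensional over
`K`, spanned by the identity element. -/
theorem center_s_gt_one (K : Type) [Field K] (s : ℕ) [NeZero s] (hs : 1 < s) :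
    Module.finrank K (Subalgebra.center K (E6.Rp s K)) = 1 ∧
      Subalgebra.center K (E6.Rp s K) = ⊥ := by
  refine ⟨?_, E6.center_eq_bot s K⟩
  rw [E6.center_eq_bot s K]
  exact Subalgebra.finrank_bot
end

section
/- Let K be a field, s ≥ 1, and R = R'ₛ = K[Qₛ]/I' the algebra of tree class E₆. For each vertex index i ∈ ℤ/8sℤ let S_i denote the simple R-module at vertex i and P_i = R e_i its projective cover. Then for every r, the second syzygy satisfies Ω²(S_{4r+1}) ≅ S_{4(r+1)+2}, the beginning of the minimal projective resolution being ⋯ → P_{4r+2} →^{α} P_{4r+1} → S_{4r+1} → 0 (vertex indices taken modulo 8s). -/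
open FreeAlgebra

section Aux
open E6
variable {s : ℕ} [NeZero s] {K : Type} [Field K]

namespace E6X
open E6

theorem e_mul (i j : ZMod (8*s)) :
    eIdem s K i * eIdem s K j = if i = j then eIdem s K i else 0 := by
  have h := RingQuot.mkAlgHom_rel K (Rel.vertex_mul (s := s) (K := K) i j)
  rw [map_mul] at h
  rw [eIdem, eIdem, h]
  split_ifs <;> simp [eIdem]

theorem e_sum : (∑ i : ZMod (8*s), eIdem s K i) = 1 := by
  have h := RingQuot.mkAlgHom_rel K (Rel.vertex_sum (s := s) (K := K))
  rw [map_sum, map_one] at h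
  simpa [eIdem] using h

theorem a_src (k : ZMod (6*s)) : A s K k * eIdem s K (srcA s k) = A s K k := by
  have h := RingQuot.mkAlgHom_rel K (Rel.a_src (s := s) (K := K) k)
  rw [map_mul] at h; exact h

theorem a_tgt (k : ZMod (6*s)) : eIdem s K (tgtA s k) * A s K k = A s K k := by
  have h := RingQuot.mkAlgHom_rel K (Rel.a_tgt (s := s) (K := K) k)
  rw [map_mul] at h; exact h

theorem g_src (t : ZMod (2*s)) : G s K t * eIdem s K (srcG s t) = G s K t := by
  have h := RingQuot.mkAlgHom_rel K (Rel.g_src (s := s) (K := K) t)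
  rw [map_mul] at h; exact h

theorem g_tgt (t : ZMod (2*s)) : eIdem s K (tgtG s t) * G s K t = G s K t := by
  have h := RingQuot.mkAlgHom_rel K (Rel.g_tgt (s := s) (K := K) t)
  rw [map_mul] at h; exact h

theorem a_mul_e (k : ZMod (6*s)) (i : ZMod (8*s)) :
    A s K k * eIdem s K i = if srcA s k = i then A s K k else 0 := by
  conv_lhs => rw [← a_src k]
  rw [mul_assoc, e_mul]
  split_ifs with h
  · subst h; exact a_src k
  · simp

theorem g_mul_e (t : ZMod (2*s)) (i : ZMod (8*s)) :
    G s K t * eIdem s K i = if srcG s t = i then G s K t else 0 := by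
  conv_lhs => rw [← g_src t]
  rw [mul_assoc, e_mul]
  split_ifs with h
  · subst h; exact g_src t
  · simp

theorem path5_eq_zero {x₁ x₂ x₃ x₄ x₅ : FreeAlgebra K (Gen s)} (h₁ : IsArrow s K x₁)
    (h₂ : IsArrow s K x₂) (h₃ : IsArrow s K x₃) (h₄ : IsArrow s K x₄) (h₅ : IsArrow s K x₅) :
    RingQuot.mkAlgHom K (Rel s K) x₁ * (RingQuot.mkAlgHom K (Rel s K) x₂ *
      (RingQuot.mkAlgHom K (Rel s K) x₃ * (RingQuot.mkAlgHom K (Rel s K) x₄ *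
        RingQuot.mkAlgHom K (Rel s K) x₅))) = 0 := by
  have h := RingQuot.mkAlgHom_rel K (Rel.path5 (s := s) (K := K) x₁ x₂ x₃ x₄ x₅ h₁ h₂ h₃ h₄ h₅)
  rw [map_zero] at h
  calc _ = RingQuot.mkAlgHom K (Rel s K) (x₁ * x₂ * x₃ * x₄ * x₅) := by
        simp [map_mul, mul_assoc]
    _ = 0 := h

end E6X
end Aux
section Aux2
open E6
variable {s : ℕ} [NeZero s] {K : Type} [Field K]

namespace E6X
open E6

theorem mem_P_iff {i : ZMod (8*s)} {x : Rp s K} :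
    x ∈ P s K i ↔ x * eIdem s K i = x := by
  constructor
  · intro hx
    refine Submodule.span_induction (p := fun x _ => x * eIdem s K i = x) ?_ ?_ ?_ ?_ hx
    · intro y hy; exact hy
    · simp
    · intro a b _ _ ha hb; rw [add_mul, ha, hb]
    · intro r a _ ha; rw [smul_eq_mul, mul_assoc, ha]
  · intro h; exact Submodule.subset_span h

end E6X
end Aux2
section Aux2b
open E6
namespace E6X
/-- The span of the arrows, as a left submodule. -/
noncomputable def M (s : ℕ) [NeZero s] (K : Type) [Field K] : Submodule (Rp s K) (Rp s K) :=
  Submodule.span (Rp s K) {x | (∃ k, x = A s K k) ∨ ∃ t, x = G s K t}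
end E6X
end Aux2b
section Aux2c
open E6
variable {s : ℕ} [NeZero s] {K : Type} [Field K]
namespace E6X

theorem A_mem_M (k : ZMod (6*s)) : A s K k ∈ M s K :=
  Submodule.subset_span (Or.inl ⟨k, rfl⟩)

theorem G_mem_M (t : ZMod (2*s)) : G s K t ∈ M s K :=
  Submodule.subset_span (Or.inr ⟨t, rfl⟩)

theorem mul_mem_left' {N : Submodule (Rp s K) (Rp s K)} {x : Rp s K} (y : Rp s K)
    (hx : x ∈ N) : y * x ∈ N := by
  simpa [smul_eq_mul] using N.smul_mem y hx

theorem A_mem_rad (k : ZMod (6*s)) : A s K k ∈ radIdeal s K :=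
  Submodule.subset_span ⟨A s K k, 1, Or.inl ⟨k, rfl⟩, (mul_one _).symm⟩

theorem G_mem_rad (t : ZMod (2*s)) : G s K t ∈ radIdeal s K :=
  Submodule.subset_span ⟨G s K t, 1, Or.inr ⟨t, rfl⟩, (mul_one _).symm⟩

/-- Right multiplication by `e i` maps the radical into itself. -/
theorem rad_mul_e {x : Rp s K} (hx : x ∈ radIdeal s K) (i : ZMod (8*s)) :
    x * eIdem s K i ∈ radIdeal s K := by
  refine Submodule.span_induction
    (p := fun x _ => x * eIdem s K i ∈ radIdeal s K) ?_ ?_ ?_ ?_ hx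
  · rintro z ⟨w, y, hw, rfl⟩
    exact Submodule.subset_span ⟨w, y * eIdem s K i, hw, mul_assoc _ _ _⟩
  · simp
  · intro a b _ _ ha hb; rw [add_mul]; exact Submodule.add_mem _ ha hb
  · intro r a _ ha; rw [smul_eq_mul, mul_assoc]; exact mul_mem_left' r ha

/-- If every arrow times `e i` lies in a submodule `N`, then `M * e i ⊆ N`. -/
theorem M_mul_e_mem {N : Submodule (Rp s K) (Rp s K)} {i : ZMod (8*s)}
    (hN : ∀ k, srcA s k = i → A s K k ∈ N) (hNg : ∀ t, srcG s t = i → G s K t ∈ N)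
    {x : Rp s K} (hx : x ∈ M s K) :
    x * eIdem s K i ∈ N := by
  refine Submodule.span_induction (p := fun x _ => x * eIdem s K i ∈ N) ?_ ?_ ?_ ?_ hx
  · rintro z (⟨k, rfl⟩ | ⟨t, rfl⟩)
    · rw [a_mul_e]; split_ifs with h
      · exact hN k h
      · exact N.zero_mem
    · rw [g_mul_e]; split_ifs with h
      · exact hNg t h
      · exact N.zero_mem
  · simp
  · intro a b _ _ ha hb; rw [add_mul]; exact N.add_mem ha hb
  · intro r a _ ha; rw [smul_eq_mul, mul_assoc]; exact mul_mem_left' r ha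

/-- The radical is contained in the left span of the arrows. -/
theorem rad_le_M : radIdeal s K ≤ M s K := by
  have key : ∀ f : FreeAlgebra K (Gen s), ∀ w : Rp s K,
      ((∃ k, w = A s K k) ∨ ∃ t, w = G s K t) →
      w * RingQuot.mkAlgHom K (Rel s K) f ∈ M s K := by
    intro f
    induction f using FreeAlgebra.induction with
    | grade0 c =>
      intro w hw
      rw [AlgHom.commutes]
      rw [← Algebra.commutes c, ← Algebra.smul_def]
      rcases hw with ⟨k, rfl⟩ | ⟨t, rfl⟩
      · exact Submodule.smul_of_tower_mem _ c (A_mem_M k)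
      · exact Submodule.smul_of_tower_mem _ c (G_mem_M t)
    | grade1 x =>
      intro w hw
      cases x with
      | e i =>
        rcases hw with ⟨k, rfl⟩ | ⟨t, rfl⟩
        · rw [show (RingQuot.mkAlgHom K (Rel s K)) (FreeAlgebra.ι K (Gen.e i)) =
            eIdem s K i from rfl, a_mul_e]
          split_ifs
          · exact A_mem_M k
          · exact Submodule.zero_mem _
        · rw [show (RingQuot.mkAlgHom K (Rel s K)) (FreeAlgebra.ι K (Gen.e i)) =
            eIdem s K i from rfl, g_mul_e]
          split_ifs
          · exact G_mem_M t
          · exact Submodule.zero_mem _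
      | a k' =>
        exact mul_mem_left' _ (A_mem_M k')
      | g t' =>
        exact mul_mem_left' _ (G_mem_M t')
    | mul a b iha ihb =>
      intro w hw
      rw [map_mul, ← mul_assoc]
      have h1 : w * RingQuot.mkAlgHom K (Rel s K) a ∈ M s K :=
        iha w hw
      refine Submodule.span_induction
        (p := fun x _ => x * RingQuot.mkAlgHom K (Rel s K) b ∈
          M s K) ?_ ?_ ?_ ?_ h1
      · intro w' hw'; exact ihb w' hw'
      · simp
      · intro u v _ _ hu hv; rw [add_mul]; exact Submodule.add_mem _ hu hv
      · intro r u _ hu; rw [smul_eq_mul, mul_assoc]; exact mul_mem_left' r hu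
    | add a b iha ihb =>
      intro w hw
      rw [map_add, mul_add]
      exact Submodule.add_mem _ (iha w hw) (ihb w hw)
  intro x hx
  refine Submodule.span_induction (p := fun x _ => x ∈ M s K)
    ?_ ?_ ?_ ?_ hx
  · rintro z ⟨w, y, hw, rfl⟩
    obtain ⟨f, rfl⟩ := RingQuot.mkAlgHom_surjective K (Rel s K) y
    exact key f w hw
  · simp
  · intro a b _ _ ha hb; exact Submodule.add_mem _ ha hb
  · intro r a _ ha; exact Submodule.smul_mem _ _ ha

end E6X
end Aux2c
set_option linter.unusedSectionVars false
section Aux3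
open E6
variable {s : ℕ} [NeZero s]

namespace E6X
open E6

theorem s_pos : 0 < s := Nat.pos_of_ne_zero (NeZero.ne s)

theorem zmod8_inj {a b : ℕ} (ha : a < 8*s) (hb : b < 8*s)
    (h : (a : ZMod (8*s)) = (b : ZMod (8*s))) : a = b := by
  have := congrArg ZMod.val h
  rwa [ZMod.val_cast_of_lt ha, ZMod.val_cast_of_lt hb] at this

theorem zmod6_inj {a b : ℕ} (ha : a < 6*s) (hb : b < 6*s)
    (h : (a : ZMod (6*s)) = (b : ZMod (6*s))) : a = b := by
  have := congrArg ZMod.val h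
  rwa [ZMod.val_cast_of_lt ha, ZMod.val_cast_of_lt hb] at this

theorem val_lt2 (u : ZMod (2*s)) : u.val < 2*s := ZMod.val_lt u

theorem val_ai (u : ZMod (2*s)) {j : ℕ} (hj : j < 3) : (ai s u j).val = 3 * u.val + j := by
  have := val_lt2 u
  exact ZMod.val_cast_of_lt (by omega)

theorem val_vx (u : ZMod (2*s)) {j : ℕ} (hj : j ≤ 3) : (vx s u j).val = 4 * u.val + j := by
  have := val_lt2 u
  exact ZMod.val_cast_of_lt (by omega)

theorem srcA_ai (u : ZMod (2*s)) {j : ℕ} (hj : j < 3) : srcA s (ai s u j) = vx s u j := by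
  rw [srcA, val_ai u hj, vx]
  have h1 : (3 * u.val + j) / 3 = u.val := by omega
  have h2 : (3 * u.val + j) % 3 = j := by omega
  rw [h1, h2]

theorem tgtA_ai (u : ZMod (2*s)) {j : ℕ} (hj : j < 3) : tgtA s (ai s u j) = vx s u (j+1) := by
  rw [tgtA, val_ai u hj, vx]
  have h1 : (3 * u.val + j) / 3 = u.val := by omega
  have h2 : (3 * u.val + j) % 3 = j := by omega
  rw [h1, h2, Nat.add_assoc]

theorem srcG_eq (u : ZMod (2*s)) : srcG s u = vx s u 3 := rfl

theorem tgtG_eq (u : ZMod (2*s)) : tgtG s u = vx s (u+1) 0 := by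
  rw [tgtG, vx]
  have h := ZMod.val_add u 1
  have h1 : (1 : ZMod (2*s)).val = 1 % (2*s) := ZMod.val_one_eq_one_mod (2*s)
  have hmod : (u + 1).val ≡ u.val + 1 [MOD 2*s] := by
    rw [h, h1]
    calc (u.val + 1 % (2*s)) % (2*s) ≡ u.val + 1 % (2*s) [MOD 2*s] := Nat.mod_modEq _ _
      _ ≡ u.val + 1 [MOD 2*s] := Nat.ModEq.add_left _ (Nat.mod_modEq _ _)
  have : 4 * (u.val + 1) ≡ 4 * ((u+1).val) [MOD 4 * (2*s)] := Nat.ModEq.mul_left' _ hmod.symm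
  have h8 : 4 * (2*s) = 8 * s := by ring
  rw [h8] at this
  rw [(ZMod.natCast_eq_natCast_iff _ _ _).mpr this]
  norm_num

theorem srcA_eq_vx {k : ZMod (6*s)} {u : ZMod (2*s)} {j : ℕ} (hj : j < 3)
    (h : srcA s k = vx s u j) : k = ai s u j := by
  have hk := ZMod.val_lt k
  have hu := val_lt2 u
  have heq := zmod8_inj (a := 4 * (k.val / 3) + k.val % 3) (b := 4 * u.val + j)
    (by omega) (by omega) h
  have hkv : k.val = 3 * u.val + j := by omega
  have : ((k.val : ℕ) : ZMod (6*s)) = ((3 * u.val + j : ℕ) : ZMod (6*s)) := by rw [hkv]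
  rwa [ZMod.natCast_rightInverse k] at this

theorem srcA_ne_vx3 {k : ZMod (6*s)} {u : ZMod (2*s)} (h : srcA s k = vx s u 3) : False := by
  have hk := ZMod.val_lt k
  have hu := val_lt2 u
  have heq := zmod8_inj (a := 4 * (k.val / 3) + k.val % 3) (b := 4 * u.val + 3)
    (by omega) (by omega) h
  omega

theorem srcG_eq_vx3 {t u : ZMod (2*s)} (h : srcG s t = vx s u 3) : t = u := by
  have ht := val_lt2 t
  have hu := val_lt2 u
  have heq := zmod8_inj (a := 4 * t.val + 3) (b := 4 * u.val + 3) (by omega) (by omega) h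
  have : t.val = u.val := by omega
  have h2 : ((t.val : ℕ) : ZMod (2*s)) = ((u.val : ℕ) : ZMod (2*s)) := by rw [this]
  rwa [ZMod.natCast_rightInverse t, ZMod.natCast_rightInverse u] at h2

theorem srcG_ne_vx {t u : ZMod (2*s)} {j : ℕ} (hj : j < 3) (h : srcG s t = vx s u j) :
    False := by
  have ht := val_lt2 t
  have hu := val_lt2 u
  have heq := zmod8_inj (a := 4 * t.val + 3) (b := 4 * u.val + j) (by omega) (by omega) h
  omega

theorem ai_inj {u u' : ZMod (2*s)} {j j' : ℕ} (hj : j < 3) (hj' : j' < 3)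
    (h : ai s u j = ai s u' j') : u = u' ∧ j = j' := by
  have hu := val_lt2 u
  have hu' := val_lt2 u'
  have heq := zmod6_inj (a := 3 * u.val + j) (b := 3 * u'.val + j') (by omega) (by omega) h
  have h1 : u.val = u'.val := by omega
  have h2 : ((u.val : ℕ) : ZMod (2*s)) = ((u'.val : ℕ) : ZMod (2*s)) := by rw [h1]
  rw [ZMod.natCast_rightInverse u, ZMod.natCast_rightInverse u'] at h2
  exact ⟨h2, by omega⟩

theorem s_cast_ne_zero : ((s : ℕ) : ZMod (2*s)) ≠ 0 := by
  intro h
  have := congrArg ZMod.val h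
  rw [ZMod.val_cast_of_lt (by have := s_pos (s := s); omega), ZMod.val_zero] at this
  exact NeZero.ne s this

end E6X
end Aux3
section Aux4
open E6
variable {s : ℕ} [NeZero s] {K : Type} [Field K]

namespace E6X
open E6

theorem e_smul_sum_mul (c c' : ZMod (8*s) → K) :
    (∑ i, c i • eIdem s K i) * (∑ i, c' i • eIdem s K i)
      = ∑ i, (c i * c' i) • eIdem s K i := by
  have key : ∀ i i' : ZMod (8*s), (c i • eIdem s K i) * (c' i' • eIdem s K i')
      = if i = i' then (c i * c' i') • eIdem s K i else 0 := by
    intro i i'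
    rw [smul_mul_assoc, mul_smul_comm, e_mul]
    split_ifs
    · rw [smul_smul]
    · simp
  rw [Finset.sum_mul_sum]
  simp only [key]
  simp [Finset.sum_ite_eq]

theorem decomp (x : Rp s K) : ∃ (c : ZMod (8*s) → K) (j : Rp s K),
    j ∈ radIdeal s K ∧ x = (∑ i, c i • eIdem s K i) + j := by
  obtain ⟨f, rfl⟩ := RingQuot.mkAlgHom_surjective K (Rel s K) x
  induction f using FreeAlgebra.induction with
  | grade0 c =>
    refine ⟨fun _ => c, 0, Submodule.zero_mem _, ?_⟩
    rw [AlgHom.commutes, Algebra.algebraMap_eq_smul_one, ← e_sum, Finset.smul_sum, add_zero]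
  | grade1 x =>
    cases x with
    | e i =>
      refine ⟨fun i' => if i' = i then 1 else 0, 0, Submodule.zero_mem _, ?_⟩
      rw [add_zero]
      rw [show (RingQuot.mkAlgHom K (Rel s K)) (FreeAlgebra.ι K (Gen.e i)) =
        eIdem s K i from rfl]
      rw [Finset.sum_congr rfl (fun i' _ => by rw [ite_smul, one_smul, zero_smul])]
      rw [Finset.sum_ite_eq' Finset.univ i (fun i' => eIdem s K i')]
      simp
    | a k => exact ⟨0, A s K k, A_mem_rad k, by simp [A]⟩
    | g t => exact ⟨0, G s K t, G_mem_rad t, by simp [G]⟩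
  | mul a b iha ihb =>
    obtain ⟨c, j, hj, hx⟩ := iha
    obtain ⟨c', j', hj', hy⟩ := ihb
    rw [map_mul, hx, hy]
    refine ⟨fun i => c i * c' i,
      (∑ i, c i • eIdem s K i) * j' + (j * ∑ i, c' i • eIdem s K i) + j * j', ?_, ?_⟩
    · refine Submodule.add_mem _ (Submodule.add_mem _ ?_ ?_) ?_
      · rw [Finset.sum_mul]
        refine Submodule.sum_mem _ (fun i _ => ?_)
        rw [smul_mul_assoc]
        exact Submodule.smul_of_tower_mem _ _ (mul_mem_left' _ hj')
      · rw [Finset.mul_sum]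
        refine Submodule.sum_mem _ (fun i _ => ?_)
        rw [mul_smul_comm]
        exact Submodule.smul_of_tower_mem _ _ (rad_mul_e hj i)
      · exact mul_mem_left' _ hj'
    · rw [add_mul, mul_add, mul_add, e_smul_sum_mul]
      abel
  | add a b iha ihb =>
    obtain ⟨c, j, hj, hx⟩ := iha
    obtain ⟨c', j', hj', hy⟩ := ihb
    refine ⟨fun i => c i + c' i, j + j', Submodule.add_mem _ hj hj', ?_⟩
    rw [map_add, hx, hy]
    simp only [add_smul, Finset.sum_add_distrib]
    abel

theorem peel {i : ZMod (8*s)} {w₀ : Rp s K}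
    (hA : ∀ k, srcA s k = i → A s K k ∈ Submodule.span (Rp s K) {w₀})
    (hG : ∀ t, srcG s t = i → G s K t ∈ Submodule.span (Rp s K) {w₀})
    (x : Rp s K) : ∃ (c : K) (y : Rp s K), x * eIdem s K i = c • eIdem s K i + y * w₀ := by
  obtain ⟨c, j, hj, rfl⟩ := decomp x
  have h1 : (∑ i', c i' • eIdem s K i') * eIdem s K i = c i • eIdem s K i := by
    rw [Finset.sum_mul]
    have key : ∀ i' : ZMod (8*s), (c i' • eIdem s K i') * eIdem s K i
        = if i' = i then c i' • eIdem s K i' else 0 := by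
      intro i'; rw [smul_mul_assoc, e_mul]; split_ifs with h <;> simp [h]
    rw [Finset.sum_congr rfl (fun i' _ => key i')]
    rw [Finset.sum_ite_eq' Finset.univ i (fun i' => c i' • eIdem s K i')]
    simp
  have h2 : j * eIdem s K i ∈ Submodule.span (Rp s K) {w₀} :=
    M_mul_e_mem hA hG (rad_le_M hj)
  obtain ⟨y, hy⟩ := Submodule.mem_span_singleton.mp h2
  exact ⟨c i, y, by rw [add_mul, h1, ← hy, smul_eq_mul]⟩

end E6X
end Aux4
section Rep
open E6
variable {s : ℕ} [NeZero s] {K : Type} [Field K]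

namespace E6X
open E6


instance genDecEq : DecidableEq (Gen s) := fun a b =>
  match a, b with
  | Gen.e i, Gen.e j =>
    if h : i = j then .isTrue (by rw [h]) else .isFalse (fun hc => by cases hc; exact h rfl)
  | Gen.e _, Gen.a _ => .isFalse (fun hc => by cases hc)
  | Gen.e _, Gen.g _ => .isFalse (fun hc => by cases hc)
  | Gen.a _, Gen.e _ => .isFalse (fun hc => by cases hc)
  | Gen.a k, Gen.a l =>
    if h : k = l then .isTrue (by rw [h]) else .isFalse (fun hc => by cases hc; exact h rfl)
  | Gen.a _, Gen.g _ => .isFalse (fun hc => by cases hc)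
  | Gen.g _, Gen.e _ => .isFalse (fun hc => by cases hc)
  | Gen.g _, Gen.a _ => .isFalse (fun hc => by cases hc)
  | Gen.g t, Gen.g u =>
    if h : t = u then .isTrue (by rw [h]) else .isFalse (fun hc => by cases hc; exact h rfl)

def idx4 (m : Fin 5) : Fin 4 := ⟨m.val - 1, by have := m.isLt; omega⟩
def idx5 (m : Fin 5) : Fin 5 := ⟨m.val - 1, by have := m.isLt; omega⟩

/-- Projection onto the coordinates labelled by vertex `i`. -/
noncomputable def proj (vtx : Fin 5 → ZMod (8*s)) (i : ZMod (8*s)) :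
    (Fin 5 → K) →ₗ[K] (Fin 5 → K) where
  toFun x m := if vtx m = i then x m else 0
  map_add' x y := by funext m; by_cases h : vtx m = i <;> simp [h]
  map_smul' c x := by funext m; by_cases h : vtx m = i <;> simp [h]

/-- The action of an arrow on the chain module. -/
noncomputable def shift (δ : Fin 4 → Gen s) (w : Gen s) :
    (Fin 5 → K) →ₗ[K] (Fin 5 → K) where
  toFun x m := if 0 < m.val ∧ δ (idx4 m) = w then x (idx5 m) else 0
  map_add' x y := by
    funext m; by_cases h : 0 < m.val ∧ δ (idx4 m) = w <;>
      simp only [h, Pi.add_apply, ite_true, ite_false, and_self, add_zero]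
  map_smul' c x := by
    funext m; by_cases h : 0 < m.val ∧ δ (idx4 m) = w <;>
      simp only [h, Pi.smul_apply, RingHom.id_apply, ite_true, ite_false, and_self, smul_zero]

theorem proj_apply (vtx : Fin 5 → ZMod (8*s)) (i : ZMod (8*s)) (x : Fin 5 → K) (m : Fin 5) :
    proj vtx i x m = if vtx m = i then x m else 0 := rfl

theorem shift_apply (δ : Fin 4 → Gen s) (w : Gen s) (x : Fin 5 → K) (m : Fin 5) :
    shift δ w x m = if 0 < m.val ∧ δ (idx4 m) = w then x (idx5 m) else 0 := rfl

/-- The action of the generators. -/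
noncomputable def genAct (vtx : Fin 5 → ZMod (8*s)) (δ : Fin 4 → Gen s) :
    Gen s → Module.End K (Fin 5 → K)
  | Gen.e i => proj vtx i
  | Gen.a k => shift δ (Gen.a k)
  | Gen.g t => shift δ (Gen.g t)

theorem genAct_e (vtx : Fin 5 → ZMod (8*s)) (δ : Fin 4 → Gen s) (i : ZMod (8*s)) :
    genAct (K := K) vtx δ (Gen.e i) = proj vtx i := rfl

theorem genAct_a (vtx : Fin 5 → ZMod (8*s)) (δ : Fin 4 → Gen s) (k : ZMod (6*s)) :
    genAct (K := K) vtx δ (Gen.a k) = shift δ (Gen.a k) := rfl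

theorem genAct_g (vtx : Fin 5 → ZMod (8*s)) (δ : Fin 4 → Gen s) (t : ZMod (2*s)) :
    genAct (K := K) vtx δ (Gen.g t) = shift δ (Gen.g t) := rfl

theorem shift_low (δ : Fin 4 → Gen s) (w : Gen s) {n : ℕ} {x : Fin 5 → K}
    (hx : ∀ m : Fin 5, m.val < n → x m = 0) :
    ∀ m : Fin 5, m.val < n + 1 → shift δ w x m = 0 := by
  intro m hm
  rw [shift_apply]
  split_ifs with h
  · exact hx (idx5 m) (by simp only [idx5]; omega)
  · rfl

theorem shift_five_zero (δ : Fin 4 → Gen s) (w₁ w₂ w₃ w₄ w₅ : Gen s) :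
    shift (K := K) δ w₁ * (shift δ w₂ * (shift δ w₃ * (shift δ w₄ * shift δ w₅))) = 0 := by
  refine LinearMap.ext fun x => funext fun m => ?_
  have h0 : ∀ m : Fin 5, m.val < 0 → x m = 0 := by intro m hm; omega
  have h1 := shift_low δ w₅ h0
  have h2 := shift_low δ w₄ h1
  have h3 := shift_low δ w₃ h2
  have h4 := shift_low δ w₂ h3
  have h5 := shift_low δ w₁ h4
  have := h5 m (by have := m.isLt; omega)
  simpa [Module.End.mul_apply] using this

theorem shift_triple_zero (δ : Fin 4 → Gen s) (w₀ w₁ w₂ : Gen s)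
    (H : ∀ j0 j1 j2 : Fin 4, (j1 : ℕ) = (j0 : ℕ) + 1 → (j2 : ℕ) = (j1 : ℕ) + 1 →
      ¬(δ j0 = w₀ ∧ δ j1 = w₁ ∧ δ j2 = w₂)) :
    shift (K := K) δ w₂ * (shift δ w₁ * shift δ w₀) = 0 := by
  refine LinearMap.ext fun x => funext fun m => ?_
  simp only [Module.End.mul_apply, LinearMap.zero_apply, Pi.zero_apply]
  rw [shift_apply]
  split_ifs with h2
  · rw [shift_apply]
    split_ifs with h1
    · rw [shift_apply]
      split_ifs with h0
      · exfalso
        refine H (idx4 (idx5 (idx5 m))) (idx4 (idx5 m)) (idx4 m) ?_ ?_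
          ⟨h0.2, h1.2, h2.2⟩
        · have := h0.1; have := h1.1; have := h2.1
          simp only [idx4, idx5] at *; omega
        · have := h1.1; have := h2.1
          simp only [idx4, idx5] at *; omega
      · rfl
    · rfl
  · rfl

theorem respects (vtx : Fin 5 → ZMod (8*s)) (δ : Fin 4 → Gen s)
    (HA : ∀ (j : Fin 4) k, δ j = Gen.a k → srcA s k = vtx j.castSucc ∧ tgtA s k = vtx j.succ)
    (HG : ∀ (j : Fin 4) t, δ j = Gen.g t → srcG s t = vtx j.castSucc ∧ tgtG s t = vtx j.succ)
    (HC : ∀ j0 j1 j2 : Fin 4, (j1 : ℕ) = (j0 : ℕ) + 1 → (j2 : ℕ) = (j1 : ℕ) + 1 →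
      ∀ t : ZMod (2*s), ¬(δ j0 = Gen.a (ai s t 0) ∧ δ j1 = Gen.a (ai s t 1) ∧
        δ j2 = Gen.a (ai s t 2)))
    (HZ : ∀ j0 j1 j2 : Fin 4, (j1 : ℕ) = (j0 : ℕ) + 1 → (j2 : ℕ) = (j1 : ℕ) + 1 →
      ∀ t : ZMod (2*s), ¬(δ j0 = Gen.a (ai s (t + (s : ZMod (2*s)) - 1) 2) ∧
        δ j1 = Gen.g (t - 1) ∧ δ j2 = Gen.a (ai s t 0))) :
    ∀ ⦃x y : FreeAlgebra K (Gen s)⦄, Rel s K x y →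
      FreeAlgebra.lift K (genAct (K := K) vtx δ) x
        = FreeAlgebra.lift K (genAct (K := K) vtx δ) y := by
  intro x y h
  induction h with
  | vertex_mul i j =>
    simp only [map_mul, FreeAlgebra.lift_ι_apply, genAct_e]
    by_cases hij : i = j
    · subst hij
      rw [if_pos rfl, FreeAlgebra.lift_ι_apply, genAct_e]
      refine LinearMap.ext fun x => funext fun m => ?_
      simp only [Module.End.mul_apply, proj_apply]
      split_ifs <;> rfl
    · rw [if_neg hij, map_zero]
      refine LinearMap.ext fun x => funext fun m => ?_
      simp only [Module.End.mul_apply, proj_apply, LinearMap.zero_apply, Pi.zero_apply]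
      split_ifs with ha hb
      · exact ((hij (ha.symm.trans hb)).elim : _)
      · rfl
      · rfl
  | vertex_sum =>
    rw [map_sum, map_one]
    have key : ∀ i : ZMod (8*s),
        FreeAlgebra.lift K (genAct (K := K) vtx δ) (FreeAlgebra.ι K (Gen.e i))
          = proj vtx i := fun i => by rw [FreeAlgebra.lift_ι_apply, genAct_e]
    rw [Finset.sum_congr rfl (fun i _ => key i)]
    refine LinearMap.ext fun x => funext fun m => ?_
    simp only [LinearMap.coe_sum, Finset.sum_apply, Module.End.one_apply, proj_apply]
    rw [Finset.sum_ite_eq Finset.univ (vtx m) (fun _ => x m)]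
    simp
  | a_src k =>
    simp only [map_mul, FreeAlgebra.lift_ι_apply, genAct_e, genAct_a, genAct_g]
    refine LinearMap.ext fun x => funext fun m => ?_
    simp only [Module.End.mul_apply, shift_apply, proj_apply]
    split_ifs with h1 h2
    · rfl
    · exfalso; apply h2
      rw [(HA (idx4 m) k h1.2).1]
      congr 1
    · rfl
  | a_tgt k =>
    simp only [map_mul, FreeAlgebra.lift_ι_apply, genAct_e, genAct_a, genAct_g]
    refine LinearMap.ext fun x => funext fun m => ?_
    simp only [Module.End.mul_apply, shift_apply, proj_apply]
    split_ifs with h1 h2 h3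
    · rfl
    · rfl
    · exfalso; apply h1
      have hm := h3.1
      have h4 : (idx4 m).succ = m := Fin.ext (by simp only [Fin.val_succ, idx4]; omega)
      rw [(HA (idx4 m) k h3.2).2, h4]
    · rfl
  | g_src t =>
    simp only [map_mul, FreeAlgebra.lift_ι_apply, genAct_e, genAct_a, genAct_g]
    refine LinearMap.ext fun x => funext fun m => ?_
    simp only [Module.End.mul_apply, shift_apply, proj_apply]
    split_ifs with h1 h2
    · rfl
    · exfalso; apply h2
      rw [(HG (idx4 m) t h1.2).1]
      congr 1
    · rfl
  | g_tgt t =>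
    simp only [map_mul, FreeAlgebra.lift_ι_apply, genAct_e, genAct_a, genAct_g]
    refine LinearMap.ext fun x => funext fun m => ?_
    simp only [Module.End.mul_apply, shift_apply, proj_apply]
    split_ifs with h1 h2 h3
    · rfl
    · rfl
    · exfalso; apply h1
      have hm := h3.1
      have h4 : (idx4 m).succ = m := Fin.ext (by simp only [Fin.val_succ, idx4]; omega)
      rw [(HG (idx4 m) t h3.2).2, h4]
    · rfl
  | path5 x₁ x₂ x₃ x₄ x₅ h₁ h₂ h₃ h₄ h₅ =>
    have key : ∀ x : FreeAlgebra K (Gen s), IsArrow s K x →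
        ∃ w : Gen s, FreeAlgebra.lift K (genAct (K := K) vtx δ) x = shift δ w := by
      rintro x (⟨k, rfl⟩ | ⟨t, rfl⟩)
      · exact ⟨Gen.a k, by rw [FreeAlgebra.lift_ι_apply, genAct_a]⟩
      · exact ⟨Gen.g t, by rw [FreeAlgebra.lift_ι_apply, genAct_g]⟩
    obtain ⟨w1, e1⟩ := key x₁ h₁
    obtain ⟨w2, e2⟩ := key x₂ h₂
    obtain ⟨w3, e3⟩ := key x₃ h₃
    obtain ⟨w4, e4⟩ := key x₄ h₄
    obtain ⟨w5, e5⟩ := key x₅ h₅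
    rw [map_zero, map_mul, map_mul, map_mul, map_mul, e1, e2, e3, e4, e5]
    calc shift (K := K) δ w1 * shift δ w2 * shift δ w3 * shift δ w4 * shift δ w5
        = shift δ w1 * (shift δ w2 * (shift δ w3 * (shift δ w4 * shift δ w5))) := by
          simp only [mul_assoc]
      _ = 0 := shift_five_zero δ w1 w2 w3 w4 w5
  | comm t =>
    simp only [map_mul, FreeAlgebra.lift_ι_apply, genAct_a]
    rw [shift_triple_zero δ _ _ _ (fun j0 j1 j2 hj1 hj2 => HC j0 j1 j2 hj1 hj2 t),
      shift_triple_zero δ _ _ _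
        (fun j0 j1 j2 hj1 hj2 => HC j0 j1 j2 hj1 hj2 (t + (s : ZMod (2*s))))]
  | zero_rel t =>
    simp only [map_zero, map_mul, FreeAlgebra.lift_ι_apply, genAct_a, genAct_g]
    exact shift_triple_zero δ _ _ _ (fun j0 j1 j2 hj1 hj2 => HZ j0 j1 j2 hj1 hj2 t)

end E6X
end Rep
section Rep2
open E6
variable {s : ℕ} [NeZero s] {K : Type} [Field K]

namespace E6X
open E6

/-- The representation of `R'_s` attached to admissible chain data. -/
noncomputable def repHom (vtx : Fin 5 → ZMod (8*s)) (δ : Fin 4 → Gen s)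
    (hrel : ∀ ⦃x y : FreeAlgebra K (Gen s)⦄, Rel s K x y →
      FreeAlgebra.lift K (genAct (K := K) vtx δ) x
        = FreeAlgebra.lift K (genAct (K := K) vtx δ) y) :
    Rp s K →ₐ[K] Module.End K (Fin 5 → K) :=
  RingQuot.liftAlgHom K ⟨FreeAlgebra.lift K (genAct (K := K) vtx δ), hrel⟩

theorem repHom_mk (vtx : Fin 5 → ZMod (8*s)) (δ : Fin 4 → Gen s) (hrel) (x) :
    repHom (K := K) vtx δ hrel (RingQuot.mkAlgHom K (Rel s K) x)
      = FreeAlgebra.lift K (genAct (K := K) vtx δ) x :=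
  RingQuot.liftAlgHom_mkAlgHom_apply _ _ _ _

theorem repHom_A (vtx : Fin 5 → ZMod (8*s)) (δ : Fin 4 → Gen s) (hrel) (k : ZMod (6*s)) :
    repHom (K := K) vtx δ hrel (A s K k) = shift δ (Gen.a k) := by
  rw [show A s K k = RingQuot.mkAlgHom K (Rel s K) (FreeAlgebra.ι K (Gen.a k)) from rfl,
    repHom_mk, FreeAlgebra.lift_ι_apply, genAct_a]

theorem repHom_G (vtx : Fin 5 → ZMod (8*s)) (δ : Fin 4 → Gen s) (hrel) (t : ZMod (2*s)) :
    repHom (K := K) vtx δ hrel (G s K t) = shift δ (Gen.g t) := by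
  rw [show G s K t = RingQuot.mkAlgHom K (Rel s K) (FreeAlgebra.ι K (Gen.g t)) from rfl,
    repHom_mk, FreeAlgebra.lift_ι_apply, genAct_g]

theorem shift_single_of (δ : Fin 4 → Gen s) {w : Gen s} {j : Fin 4} (h : δ j = w) :
    shift (K := K) δ w (Pi.single j.castSucc 1) = Pi.single j.succ (1 : K) := by
  funext m
  rw [shift_apply]
  by_cases hm : m = j.succ
  · subst hm
    have he : idx4 (j.succ) = j := by
      apply Fin.ext
      show (j.succ : Fin 5).val - 1 = j.val
      rw [Fin.val_succ]
      omega
    have hc : 0 < (j.succ : Fin 5).val ∧ δ (idx4 j.succ) = w := by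
      refine ⟨by simp [Fin.val_succ], ?_⟩
      rw [he, h]
    rw [if_pos hc]
    have h2 : idx5 (j.succ) = j.castSucc := by
      apply Fin.ext
      show (j.succ : Fin 5).val - 1 = (j.castSucc : Fin 5).val
      rw [Fin.val_succ, Fin.coe_castSucc]
      omega
    rw [h2, Pi.single_eq_same, Pi.single_eq_same]
  · rw [Pi.single_eq_of_ne hm]
    split_ifs with h1
    · apply Pi.single_eq_of_ne
      intro hc
      apply hm
      have hv := congrArg Fin.val hc
      simp only [idx5, Fin.coe_castSucc] at hv
      have hp := h1.1
      exact Fin.ext (by simp only [Fin.val_succ]; omega)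
    · rfl

theorem window_cases {j0 j1 j2 : Fin 4} (hj1 : (j1 : ℕ) = (j0 : ℕ) + 1)
    (hj2 : (j2 : ℕ) = (j1 : ℕ) + 1) :
    (j0 = 0 ∧ j1 = 1 ∧ j2 = 2) ∨ (j0 = 1 ∧ j1 = 2 ∧ j2 = 3) := by
  have h2 := j2.isLt
  have : (j0.val = 0 ∧ j1.val = 1 ∧ j2.val = 2) ∨
      (j0.val = 1 ∧ j1.val = 2 ∧ j2.val = 3) := by omega
  rcases this with ⟨a, b, c⟩ | ⟨a, b, c⟩
  · exact Or.inl ⟨Fin.ext (by rw [a]; rfl), Fin.ext (by rw [b]; rfl), Fin.ext (by rw [c]; rfl)⟩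
  · exact Or.inr ⟨Fin.ext (by rw [a]; rfl), Fin.ext (by rw [b]; rfl), Fin.ext (by rw [c]; rfl)⟩

end E6X
end Rep2

section Inst
open E6
variable {s : ℕ} [NeZero s] {K : Type} [Field K]

namespace E6X
open E6

/-- Vertex data of the chain module `P_{4r+1}`. -/
def vtxV (s : ℕ) [NeZero s] (r : ZMod (2*s)) : Fin 5 → ZMod (8*s)
  | 0 => vx s r 1
  | 1 => vx s r 2
  | 2 => vx s r 3
  | 3 => vx s (r+1) 0
  | 4 => vx s (r+1) 1

/-- Arrow data of the chain module `P_{4r+1}`. -/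
def delV (s : ℕ) [NeZero s] (r : ZMod (2*s)) : Fin 4 → Gen s
  | 0 => Gen.a (ai s r 1)
  | 1 => Gen.a (ai s r 2)
  | 2 => Gen.g r
  | 3 => Gen.a (ai s (r+1) 0)

/-- Vertex data of the chain module `P_{4r+2}`. -/
def vtxW (s : ℕ) [NeZero s] (r : ZMod (2*s)) : Fin 5 → ZMod (8*s)
  | 0 => vx s r 2
  | 1 => vx s r 3
  | 2 => vx s (r+1) 0
  | 3 => vx s (r+1) 1
  | 4 => vx s (r+1) 2

/-- Arrow data of the chain module `P_{4r+2}`. -/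
def delW (s : ℕ) [NeZero s] (r : ZMod (2*s)) : Fin 4 → Gen s
  | 0 => Gen.a (ai s r 2)
  | 1 => Gen.g r
  | 2 => Gen.a (ai s (r+1) 0)
  | 3 => Gen.a (ai s (r+1) 1)

theorem HA_V (r : ZMod (2*s)) : ∀ (j : Fin 4) k, delV s r j = Gen.a k →
    srcA s k = vtxV s r j.castSucc ∧ tgtA s k = vtxV s r j.succ := by
  intro j k hk
  fin_cases j
  · injection (show Gen.a (ai s r 1) = Gen.a k from hk) with h; subst h
    exact ⟨srcA_ai r (by norm_num), tgtA_ai r (by norm_num)⟩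
  · injection (show Gen.a (ai s r 2) = Gen.a k from hk) with h; subst h
    exact ⟨srcA_ai r (by norm_num), tgtA_ai r (by norm_num)⟩
  · exact (nomatch (show Gen.g r = Gen.a k from hk) : _)
  · injection (show Gen.a (ai s (r+1) 0) = Gen.a k from hk) with h; subst h
    exact ⟨srcA_ai (r+1) (by norm_num), tgtA_ai (r+1) (by norm_num)⟩

theorem HG_V (r : ZMod (2*s)) : ∀ (j : Fin 4) t, delV s r j = Gen.g t →
    srcG s t = vtxV s r j.castSucc ∧ tgtG s t = vtxV s r j.succ := by
  intro j t ht
  fin_cases j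
  · exact (nomatch (show Gen.a (ai s r 1) = Gen.g t from ht) : _)
  · exact (nomatch (show Gen.a (ai s r 2) = Gen.g t from ht) : _)
  · injection (show Gen.g r = Gen.g t from ht) with h; subst h
    exact ⟨srcG_eq r, tgtG_eq r⟩
  · exact (nomatch (show Gen.a (ai s (r+1) 0) = Gen.g t from ht) : _)

theorem HC_V (r : ZMod (2*s)) : ∀ j0 j1 j2 : Fin 4, (j1 : ℕ) = (j0 : ℕ) + 1 →
    (j2 : ℕ) = (j1 : ℕ) + 1 → ∀ t : ZMod (2*s),
    ¬(delV s r j0 = Gen.a (ai s t 0) ∧ delV s r j1 = Gen.a (ai s t 1) ∧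
      delV s r j2 = Gen.a (ai s t 2)) := by
  intro j0 j1 j2 hj1 hj2 t hc
  obtain ⟨h0, h1, h2⟩ := hc
  rcases window_cases hj1 hj2 with ⟨e0, e1, e2⟩ | ⟨e0, e1, e2⟩
  · subst e2
    exact (nomatch (show Gen.g r = Gen.a (ai s t 2) from h2) : _)
  · subst e1
    exact (nomatch (show Gen.g r = Gen.a (ai s t 1) from h1) : _)

theorem HZ_V (r : ZMod (2*s)) : ∀ j0 j1 j2 : Fin 4, (j1 : ℕ) = (j0 : ℕ) + 1 →
    (j2 : ℕ) = (j1 : ℕ) + 1 → ∀ t : ZMod (2*s),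
    ¬(delV s r j0 = Gen.a (ai s (t + (s : ZMod (2*s)) - 1) 2) ∧
      delV s r j1 = Gen.g (t - 1) ∧ delV s r j2 = Gen.a (ai s t 0)) := by
  intro j0 j1 j2 hj1 hj2 t hc
  obtain ⟨h0, h1, h2⟩ := hc
  rcases window_cases hj1 hj2 with ⟨e0, e1, e2⟩ | ⟨e0, e1, e2⟩
  · subst e0
    have h0' : Gen.a (ai s r 1) = Gen.a (ai s (t + (s : ZMod (2*s)) - 1) 2) := h0
    injection h0' with h
    have := (ai_inj (by norm_num) (by norm_num) h).2
    omega
  · subst e0 e1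
    have h0' : Gen.a (ai s r 2) = Gen.a (ai s (t + (s : ZMod (2*s)) - 1) 2) := h0
    have h1' : Gen.g r = Gen.g (t - 1) := h1
    injection h0' with ha
    injection h1' with hb
    have hr : r = t + (s : ZMod (2*s)) - 1 := (ai_inj (by norm_num) (by norm_num) ha).1
    have : t - 1 + (s : ZMod (2*s)) = t + (s : ZMod (2*s)) - 1 := by ring
    rw [← this, ← hb] at hr
    exact s_cast_ne_zero (left_eq_add.mp hr)

theorem HA_W (r : ZMod (2*s)) : ∀ (j : Fin 4) k, delW s r j = Gen.a k →
    srcA s k = vtxW s r j.castSucc ∧ tgtA s k = vtxW s r j.succ := by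
  intro j k hk
  fin_cases j
  · injection (show Gen.a (ai s r 2) = Gen.a k from hk) with h; subst h
    exact ⟨srcA_ai r (by norm_num), tgtA_ai r (by norm_num)⟩
  · exact (nomatch (show Gen.g r = Gen.a k from hk) : _)
  · injection (show Gen.a (ai s (r+1) 0) = Gen.a k from hk) with h; subst h
    exact ⟨srcA_ai (r+1) (by norm_num), tgtA_ai (r+1) (by norm_num)⟩
  · injection (show Gen.a (ai s (r+1) 1) = Gen.a k from hk) with h; subst h
    exact ⟨srcA_ai (r+1) (by norm_num), tgtA_ai (r+1) (by norm_num)⟩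

theorem HG_W (r : ZMod (2*s)) : ∀ (j : Fin 4) t, delW s r j = Gen.g t →
    srcG s t = vtxW s r j.castSucc ∧ tgtG s t = vtxW s r j.succ := by
  intro j t ht
  fin_cases j
  · exact (nomatch (show Gen.a (ai s r 2) = Gen.g t from ht) : _)
  · injection (show Gen.g r = Gen.g t from ht) with h; subst h
    exact ⟨srcG_eq r, tgtG_eq r⟩
  · exact (nomatch (show Gen.a (ai s (r+1) 0) = Gen.g t from ht) : _)
  · exact (nomatch (show Gen.a (ai s (r+1) 1) = Gen.g t from ht) : _)

theorem HC_W (r : ZMod (2*s)) : ∀ j0 j1 j2 : Fin 4, (j1 : ℕ) = (j0 : ℕ) + 1 →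
    (j2 : ℕ) = (j1 : ℕ) + 1 → ∀ t : ZMod (2*s),
    ¬(delW s r j0 = Gen.a (ai s t 0) ∧ delW s r j1 = Gen.a (ai s t 1) ∧
      delW s r j2 = Gen.a (ai s t 2)) := by
  intro j0 j1 j2 hj1 hj2 t hc
  obtain ⟨h0, h1, h2⟩ := hc
  rcases window_cases hj1 hj2 with ⟨e0, e1, e2⟩ | ⟨e0, e1, e2⟩
  · subst e1
    exact (nomatch (show Gen.g r = Gen.a (ai s t 1) from h1) : _)
  · subst e0
    exact (nomatch (show Gen.g r = Gen.a (ai s t 0) from h0) : _)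

theorem HZ_W (r : ZMod (2*s)) : ∀ j0 j1 j2 : Fin 4, (j1 : ℕ) = (j0 : ℕ) + 1 →
    (j2 : ℕ) = (j1 : ℕ) + 1 → ∀ t : ZMod (2*s),
    ¬(delW s r j0 = Gen.a (ai s (t + (s : ZMod (2*s)) - 1) 2) ∧
      delW s r j1 = Gen.g (t - 1) ∧ delW s r j2 = Gen.a (ai s t 0)) := by
  intro j0 j1 j2 hj1 hj2 t hc
  obtain ⟨h0, h1, h2⟩ := hc
  rcases window_cases hj1 hj2 with ⟨e0, e1, e2⟩ | ⟨e0, e1, e2⟩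
  · subst e0 e1
    have h0' : Gen.a (ai s r 2) = Gen.a (ai s (t + (s : ZMod (2*s)) - 1) 2) := h0
    have h1' : Gen.g r = Gen.g (t - 1) := h1
    injection h0' with ha
    injection h1' with hb
    have hr : r = t + (s : ZMod (2*s)) - 1 := (ai_inj (by norm_num) (by norm_num) ha).1
    have : t - 1 + (s : ZMod (2*s)) = t + (s : ZMod (2*s)) - 1 := by ring
    rw [← this, ← hb] at hr
    exact s_cast_ne_zero (left_eq_add.mp hr)
  · subst e0
    exact (nomatch (show Gen.g r = Gen.a (ai s (t + (s : ZMod (2*s)) - 1) 2) from h0) : _)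

end E6X
end Inst
section Main
open E6
variable {s : ℕ} [NeZero s] {K : Type} [Field K]

namespace E6X
open E6

theorem e_idem (i : ZMod (8*s)) : eIdem s K i * eIdem s K i = eIdem s K i := by
  rw [e_mul]; simp

theorem peelAt (i : ZMod (8*s)) (w₀ : Rp s K)
    (hA : ∀ k, srcA s k = i → A s K k = w₀)
    (hG : ∀ t, srcG s t = i → G s K t = w₀) (x : Rp s K) :
    ∃ (c : K) (y : Rp s K), x * eIdem s K i = c • eIdem s K i + y * w₀ :=
  peel (fun k hk => by rw [hA k hk]; exact Submodule.mem_span_singleton_self _)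
       (fun t ht => by rw [hG t ht]; exact Submodule.mem_span_singleton_self _) x

theorem rad_mul_e_eq (i : ZMod (8*s)) (w₀ : Rp s K)
    (hA : ∀ k, srcA s k = i → A s K k = w₀)
    (hG : ∀ t, srcG s t = i → G s K t = w₀) {x : Rp s K} (hx : x ∈ radIdeal s K) :
    ∃ y : Rp s K, x * eIdem s K i = y * w₀ := by
  have h := M_mul_e_mem (N := Submodule.span (Rp s K) {w₀})
    (fun k hk => by rw [hA k hk]; exact Submodule.mem_span_singleton_self _)
    (fun t ht => by rw [hG t ht]; exact Submodule.mem_span_singleton_self _)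
    (rad_le_M hx)
  obtain ⟨y, hy⟩ := Submodule.mem_span_singleton.mp h
  exact ⟨y, by rw [← hy, smul_eq_mul]⟩

variable (r : ZMod (2*s))

theorem hA1 : ∀ k, srcA s k = vx s r 1 → A s K k = A s K (ai s r 1) :=
  fun k hk => by rw [srcA_eq_vx (by norm_num) hk]
theorem hG1 : ∀ t, srcG s t = vx s r 1 → G s K t = A s K (ai s r 1) :=
  fun t ht => (srcG_ne_vx (by norm_num) ht).elim
theorem hA2 : ∀ k, srcA s k = vx s r 2 → A s K k = A s K (ai s r 2) :=
  fun k hk => by rw [srcA_eq_vx (by norm_num) hk]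
theorem hG2 : ∀ t, srcG s t = vx s r 2 → G s K t = A s K (ai s r 2) :=
  fun t ht => (srcG_ne_vx (by norm_num) ht).elim
theorem hA3 : ∀ k, srcA s k = vx s r 3 → A s K k = G s K r :=
  fun k hk => (srcA_ne_vx3 hk).elim
theorem hG3 : ∀ t, srcG s t = vx s r 3 → G s K t = G s K r :=
  fun t ht => by rw [srcG_eq_vx3 ht]
theorem hA4 : ∀ k, srcA s k = vx s (r+1) 0 → A s K k = A s K (ai s (r+1) 0) :=
  fun k hk => by rw [srcA_eq_vx (by norm_num) hk]
theorem hG4 : ∀ t, srcG s t = vx s (r+1) 0 → G s K t = A s K (ai s (r+1) 0) :=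
  fun t ht => (srcG_ne_vx (by norm_num) ht).elim
theorem hA5 : ∀ k, srcA s k = vx s (r+1) 1 → A s K k = A s K (ai s (r+1) 1) :=
  fun k hk => by rw [srcA_eq_vx (by norm_num) hk]
theorem hG5 : ∀ t, srcG s t = vx s (r+1) 1 → G s K t = A s K (ai s (r+1) 1) :=
  fun t ht => (srcG_ne_vx (by norm_num) ht).elim
theorem hA6 : ∀ k, srcA s k = vx s (r+1) 2 → A s K k = A s K (ai s (r+1) 2) :=
  fun k hk => by rw [srcA_eq_vx (by norm_num) hk]
theorem hG6 : ∀ t, srcG s t = vx s (r+1) 2 → G s K t = A s K (ai s (r+1) 2) :=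
  fun t ht => (srcG_ne_vx (by norm_num) ht).elim

/-- The socle generator `z = α₄ (α₃ (γ α₂))` of `P_{4r+2}`. -/
noncomputable def zel : Rp s K :=
  A s K (ai s (r+1) 1) * (A s K (ai s (r+1) 0) * (G s K r * A s K (ai s r 2)))

theorem alpha_mul_e1 : A s K (ai s r 1) * eIdem s K (vx s r 1) = A s K (ai s r 1) := by
  have h := a_src (s := s) (K := K) (ai s r 1)
  rwa [srcA_ai r (by norm_num)] at h
theorem alpha2_mul_e2 : A s K (ai s r 2) * eIdem s K (vx s r 2) = A s K (ai s r 2) := by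
  have h := a_src (s := s) (K := K) (ai s r 2)
  rwa [srcA_ai r (by norm_num)] at h
theorem e2_mul_alpha : eIdem s K (vx s r 2) * A s K (ai s r 1) = A s K (ai s r 1) := by
  have h := a_tgt (s := s) (K := K) (ai s r 1)
  rwa [tgtA_ai r (by norm_num)] at h
theorem e3_mul_alpha2 : eIdem s K (vx s r 3) * A s K (ai s r 2) = A s K (ai s r 2) := by
  have h := a_tgt (s := s) (K := K) (ai s r 2)
  rwa [tgtA_ai r (by norm_num)] at h
theorem e4_mul_gamma : eIdem s K (vx s (r+1) 0) * G s K r = G s K r := by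
  have h := g_tgt (s := s) (K := K) r
  rwa [tgtG_eq r] at h
theorem e5_mul_alpha3 :
    eIdem s K (vx s (r+1) 1) * A s K (ai s (r+1) 0) = A s K (ai s (r+1) 0) := by
  have h := a_tgt (s := s) (K := K) (ai s (r+1) 0)
  rwa [tgtA_ai (r+1) (by norm_num)] at h
theorem e6_mul_alpha4 :
    eIdem s K (vx s (r+1) 2) * A s K (ai s (r+1) 1) = A s K (ai s (r+1) 1) := by
  have h := a_tgt (s := s) (K := K) (ai s (r+1) 1)
  rwa [tgtA_ai (r+1) (by norm_num)] at h

theorem e6_mul_zel : eIdem s K (vx s (r+1) 2) * zel r = zel r := by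
  rw [zel, ← mul_assoc, e6_mul_alpha4]

theorem zel_mul_e2 : zel r * eIdem s K (vx s r 2) = zel r := by
  rw [zel]
  simp only [mul_assoc]
  rw [alpha2_mul_e2]

theorem alpha5_mul_zel : A s K (ai s (r+1) 2) * zel r = 0 := by
  rw [zel]
  exact path5_eq_zero (Or.inl ⟨_, rfl⟩) (Or.inl ⟨_, rfl⟩) (Or.inl ⟨_, rfl⟩)
    (Or.inr ⟨_, rfl⟩) (Or.inl ⟨_, rfl⟩)

theorem zel_mul_alpha : zel r * A s K (ai s r 1) = 0 := by
  rw [zel]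
  simp only [mul_assoc]
  exact path5_eq_zero (Or.inl ⟨_, rfl⟩) (Or.inl ⟨_, rfl⟩) (Or.inr ⟨_, rfl⟩)
    (Or.inl ⟨_, rfl⟩) (Or.inl ⟨_, rfl⟩)

theorem rad_mul_zel {x : Rp s K} (hx : x ∈ radIdeal s K) : x * zel r = 0 := by
  obtain ⟨y, hy⟩ := rad_mul_e_eq (vx s (r+1) 2) (A s K (ai s (r+1) 2)) (hA6 r) (hG6 r) hx
  rw [← e6_mul_zel r, ← mul_assoc, hy, mul_assoc, alpha5_mul_zel, mul_zero]

/-- Every element of `P_{4r+2}` is a combination of the five canonical paths. -/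
theorem chainP2 (x : Rp s K) (hx : x * eIdem s K (vx s r 2) = x) :
    ∃ c₀ c₁ c₂ c₃ c₄ : K,
      x = c₀ • eIdem s K (vx s r 2) + c₁ • A s K (ai s r 2)
        + c₂ • (G s K r * A s K (ai s r 2))
        + c₃ • (A s K (ai s (r+1) 0) * (G s K r * A s K (ai s r 2)))
        + c₄ • zel r := by
  obtain ⟨c₀, y₁, h1⟩ := peelAt (vx s r 2) (A s K (ai s r 2)) (hA2 r) (hG2 r) x
  obtain ⟨c₁, y₂, h2⟩ := peelAt (vx s r 3) (G s K r) (hA3 r) (hG3 r) y₁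
  obtain ⟨c₂, y₃, h3⟩ := peelAt (vx s (r+1) 0) (A s K (ai s (r+1) 0)) (hA4 r) (hG4 r) y₂
  obtain ⟨c₃, y₄, h4⟩ := peelAt (vx s (r+1) 1) (A s K (ai s (r+1) 1)) (hA5 r) (hG5 r) y₃
  obtain ⟨c₄, y₅, h5⟩ := peelAt (vx s (r+1) 2) (A s K (ai s (r+1) 2)) (hA6 r) (hG6 r) y₄
  refine ⟨c₀, c₁, c₂, c₃, c₄, ?_⟩
  have s1 : y₁ * A s K (ai s r 2)
      = c₁ • A s K (ai s r 2) + y₂ * (G s K r * A s K (ai s r 2)) := by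
    calc y₁ * A s K (ai s r 2) = y₁ * (eIdem s K (vx s r 3) * A s K (ai s r 2)) := by
          rw [e3_mul_alpha2]
      _ = (y₁ * eIdem s K (vx s r 3)) * A s K (ai s r 2) := by rw [mul_assoc]
      _ = (c₁ • eIdem s K (vx s r 3) + y₂ * G s K r) * A s K (ai s r 2) := by rw [h2]
      _ = c₁ • (eIdem s K (vx s r 3) * A s K (ai s r 2))
          + y₂ * (G s K r * A s K (ai s r 2)) := by
          rw [add_mul, smul_mul_assoc, mul_assoc]
      _ = _ := by rw [e3_mul_alpha2]
  have s2 : y₂ * (G s K r * A s K (ai s r 2))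
      = c₂ • (G s K r * A s K (ai s r 2))
        + y₃ * (A s K (ai s (r+1) 0) * (G s K r * A s K (ai s r 2))) := by
    calc y₂ * (G s K r * A s K (ai s r 2))
        = y₂ * ((eIdem s K (vx s (r+1) 0) * G s K r) * A s K (ai s r 2)) := by
          rw [e4_mul_gamma]
      _ = (y₂ * eIdem s K (vx s (r+1) 0)) * (G s K r * A s K (ai s r 2)) := by
          rw [mul_assoc, mul_assoc]
      _ = (c₂ • eIdem s K (vx s (r+1) 0) + y₃ * A s K (ai s (r+1) 0))
          * (G s K r * A s K (ai s r 2)) := by rw [h3]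
      _ = c₂ • (eIdem s K (vx s (r+1) 0) * (G s K r * A s K (ai s r 2)))
          + y₃ * (A s K (ai s (r+1) 0) * (G s K r * A s K (ai s r 2))) := by
          rw [add_mul, smul_mul_assoc, mul_assoc]
      _ = _ := by rw [← mul_assoc, e4_mul_gamma]
  have s3 : y₃ * (A s K (ai s (r+1) 0) * (G s K r * A s K (ai s r 2)))
      = c₃ • (A s K (ai s (r+1) 0) * (G s K r * A s K (ai s r 2))) + y₄ * zel r := by
    calc y₃ * (A s K (ai s (r+1) 0) * (G s K r * A s K (ai s r 2)))
        = y₃ * ((eIdem s K (vx s (r+1) 1) * A s K (ai s (r+1) 0))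
            * (G s K r * A s K (ai s r 2))) := by rw [e5_mul_alpha3]
      _ = (y₃ * eIdem s K (vx s (r+1) 1))
          * (A s K (ai s (r+1) 0) * (G s K r * A s K (ai s r 2))) := by
          rw [mul_assoc, mul_assoc]
      _ = (c₃ • eIdem s K (vx s (r+1) 1) + y₄ * A s K (ai s (r+1) 1))
          * (A s K (ai s (r+1) 0) * (G s K r * A s K (ai s r 2))) := by rw [h4]
      _ = c₃ • (eIdem s K (vx s (r+1) 1)
            * (A s K (ai s (r+1) 0) * (G s K r * A s K (ai s r 2))))
          + y₄ * zel r := by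
          rw [add_mul, smul_mul_assoc, mul_assoc, zel]
      _ = _ := by rw [← mul_assoc, e5_mul_alpha3]
  have s4 : y₄ * zel r = c₄ • zel r := by
    calc y₄ * zel r = y₄ * (eIdem s K (vx s (r+1) 2) * zel r) := by rw [e6_mul_zel]
      _ = (y₄ * eIdem s K (vx s (r+1) 2)) * zel r := by rw [mul_assoc]
      _ = (c₄ • eIdem s K (vx s (r+1) 2) + y₅ * A s K (ai s (r+1) 2)) * zel r := by rw [h5]
      _ = c₄ • (eIdem s K (vx s (r+1) 2) * zel r)
          + y₅ * (A s K (ai s (r+1) 2) * zel r) := by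
          rw [add_mul, smul_mul_assoc, mul_assoc]
      _ = c₄ • zel r := by rw [e6_mul_zel, alpha5_mul_zel, mul_zero, add_zero]
  calc x = x * eIdem s K (vx s r 2) := hx.symm
    _ = c₀ • eIdem s K (vx s r 2) + y₁ * A s K (ai s r 2) := h1
    _ = _ := by rw [s1, s2, s3, s4]; abel

end E6X
end Main
section Models
open E6
variable {s : ℕ} [NeZero s] {K : Type} [Field K]

namespace E6X
open E6

/-- The representation of `R'_s` on the chain module `P_{4r+1}`. -/
noncomputable def phiV (r : ZMod (2*s)) : Rp s K →ₐ[K] Module.End K (Fin 5 → K) :=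
  repHom (vtxV s r) (delV s r)
    (respects (vtxV s r) (delV s r) (HA_V r) (HG_V r) (HC_V r) (HZ_V r))

/-- The representation of `R'_s` on the chain module `P_{4r+2}`. -/
noncomputable def phiW (r : ZMod (2*s)) : Rp s K →ₐ[K] Module.End K (Fin 5 → K) :=
  repHom (vtxW s r) (delW s r)
    (respects (vtxW s r) (delW s r) (HA_W r) (HG_W r) (HC_W r) (HZ_W r))

theorem phiV_A (r : ZMod (2*s)) (k : ZMod (6*s)) :
    phiV (K := K) r (A s K k) = shift (delV s r) (Gen.a k) := repHom_A _ _ _ k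
theorem phiV_G (r : ZMod (2*s)) (t : ZMod (2*s)) :
    phiV (K := K) r (G s K t) = shift (delV s r) (Gen.g t) := repHom_G _ _ _ t
theorem phiW_A (r : ZMod (2*s)) (k : ZMod (6*s)) :
    phiW (K := K) r (A s K k) = shift (delW s r) (Gen.a k) := repHom_A _ _ _ k
theorem phiW_G (r : ZMod (2*s)) (t : ZMod (2*s)) :
    phiW (K := K) r (G s K t) = shift (delW s r) (Gen.g t) := repHom_G _ _ _ t

theorem stepV0 (r : ZMod (2*s)) :
    phiV (K := K) r (A s K (ai s r 1)) (Pi.single (0 : Fin 5) 1) = Pi.single (1 : Fin 5) 1 := by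
  rw [phiV_A]
  exact shift_single_of (delV s r) (j := 0) rfl
theorem stepV1 (r : ZMod (2*s)) :
    phiV (K := K) r (A s K (ai s r 2)) (Pi.single (1 : Fin 5) 1) = Pi.single (2 : Fin 5) 1 := by
  rw [phiV_A]
  exact shift_single_of (delV s r) (j := 1) rfl
theorem stepV2 (r : ZMod (2*s)) :
    phiV (K := K) r (G s K r) (Pi.single (2 : Fin 5) 1) = Pi.single (3 : Fin 5) 1 := by
  rw [phiV_G]
  exact shift_single_of (delV s r) (j := 2) rfl
theorem stepV3 (r : ZMod (2*s)) :
    phiV (K := K) r (A s K (ai s (r+1) 0)) (Pi.single (3 : Fin 5) 1)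
      = Pi.single (4 : Fin 5) 1 := by
  rw [phiV_A]
  exact shift_single_of (delV s r) (j := 3) rfl

theorem stepW0 (r : ZMod (2*s)) :
    phiW (K := K) r (A s K (ai s r 2)) (Pi.single (0 : Fin 5) 1) = Pi.single (1 : Fin 5) 1 := by
  rw [phiW_A]
  exact shift_single_of (delW s r) (j := 0) rfl
theorem stepW1 (r : ZMod (2*s)) :
    phiW (K := K) r (G s K r) (Pi.single (1 : Fin 5) 1) = Pi.single (2 : Fin 5) 1 := by
  rw [phiW_G]
  exact shift_single_of (delW s r) (j := 1) rfl
theorem stepW2 (r : ZMod (2*s)) :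
    phiW (K := K) r (A s K (ai s (r+1) 0)) (Pi.single (2 : Fin 5) 1)
      = Pi.single (3 : Fin 5) 1 := by
  rw [phiW_A]
  exact shift_single_of (delW s r) (j := 2) rfl
theorem stepW3 (r : ZMod (2*s)) :
    phiW (K := K) r (A s K (ai s (r+1) 1)) (Pi.single (3 : Fin 5) 1)
      = Pi.single (4 : Fin 5) 1 := by
  rw [phiW_A]
  exact shift_single_of (delW s r) (j := 3) rfl

theorem zel_ne_zero (r : ZMod (2*s)) : zel (K := K) r ≠ 0 := by
  intro h0
  have happ := congrArg (fun u => phiW (K := K) r u (Pi.single (0 : Fin 5) (1 : K))) h0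
  simp only [map_mul, map_zero, Module.End.mul_apply, LinearMap.zero_apply, Pi.zero_apply,
    zel] at happ
  rw [stepW0, stepW1, stepW2, stepW3] at happ
  have := congrFun happ (4 : Fin 5)
  simp at this

theorem indepV (r : ZMod (2*s)) (c₀ c₁ c₂ c₃ : K)
    (h : c₀ • A s K (ai s r 1) + c₁ • (A s K (ai s r 2) * A s K (ai s r 1))
      + c₂ • (G s K r * (A s K (ai s r 2) * A s K (ai s r 1)))
      + c₃ • (A s K (ai s (r+1) 0) * (G s K r * (A s K (ai s r 2) * A s K (ai s r 1)))) = 0) :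
    c₀ = 0 ∧ c₁ = 0 ∧ c₂ = 0 ∧ c₃ = 0 := by
  have happ := congrArg (fun u => phiV (K := K) r u (Pi.single (0 : Fin 5) (1 : K))) h
  simp only [map_add, map_smul, map_mul, map_zero, LinearMap.add_apply, LinearMap.smul_apply,
    Module.End.mul_apply, LinearMap.zero_apply, Pi.zero_apply] at happ
  rw [stepV0, stepV1, stepV2, stepV3] at happ
  refine ⟨?_, ?_, ?_, ?_⟩
  · simpa [Pi.single_apply] using congrFun happ (1 : Fin 5)
  · simpa [Pi.single_apply] using congrFun happ (2 : Fin 5)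
  · simpa [Pi.single_apply] using congrFun happ (3 : Fin 5)
  · simpa [Pi.single_apply] using congrFun happ (4 : Fin 5)

end E6X
end Models
section Final
open E6
variable {s : ℕ} [NeZero s] {K : Type} [Field K]

namespace E6X
open E6

theorem stepMap_apply (i : ZMod (8*s)) (w : Rp s K) (x : Rp s K) (hx : x ∈ P s K i) :
    stepMap s K i w ⟨x, hx⟩ = x * w := by
  simp [stepMap, LinearMap.toSpanSingleton_apply, smul_eq_mul]

theorem part1 (r : ZMod (2*s)) :
    LinearMap.range (stepMap s K (vx s r 2) (A s K (ai s r 1)))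
      = Submodule.map (P s K (vx s r 1)).subtype (radP s K (vx s r 1)) := by
  rw [radP, Submodule.map_comap_subtype]
  apply le_antisymm
  · rintro w ⟨⟨x, hxP⟩, rfl⟩
    rw [stepMap_apply]
    constructor
    · exact mem_P_iff.mpr (by rw [mul_assoc, alpha_mul_e1])
    · exact mul_mem_left' x (A_mem_rad _)
  · rintro x ⟨hxP, hxJ⟩
    obtain ⟨y, hy⟩ := rad_mul_e_eq (vx s r 1) (A s K (ai s r 1)) (hA1 r) (hG1 r) hxJ
    have hx1 : x = y * A s K (ai s r 1) := by rw [← mem_P_iff.mp hxP, hy]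
    refine ⟨⟨y * eIdem s K (vx s r 2), mem_P_iff.mpr (by rw [mul_assoc, e_idem])⟩, ?_⟩
    rw [stepMap_apply, mul_assoc, e2_mul_alpha, ← hx1]

theorem part2 (r : ZMod (2*s)) :
    Nonempty (↥(LinearMap.ker (stepMap s K (vx s r 2) (A s K (ai s r 1))))
      ≃ₗ[Rp s K] S s K (vx s (r+1) 2)) := by
  classical
  have hle : radIdeal s K ≤
      LinearMap.ker (LinearMap.toSpanSingleton (Rp s K) (Rp s K) (zel r)) := by
    intro x hx
    rw [LinearMap.mem_ker, LinearMap.toSpanSingleton_apply, smul_eq_mul]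
    exact rad_mul_zel r hx
  set g0 : (Rp s K ⧸ radIdeal s K) →ₗ[Rp s K] Rp s K :=
    Submodule.liftQ _ (LinearMap.toSpanSingleton (Rp s K) (Rp s K) (zel r)) hle with hg0
  set T := Submodule.map (radIdeal s K).mkQ (P s K (vx s (r+1) 2)) with hT
  have hmem_e6 : eIdem s K (vx s (r+1) 2) ∈ P s K (vx s (r+1) 2) := mem_P_iff.mpr (e_idem _)
  have hg0e6 : g0 ((radIdeal s K).mkQ (eIdem s K (vx s (r+1) 2))) = zel r := by
    rw [hg0, Submodule.mkQ_apply, Submodule.liftQ_apply, LinearMap.toSpanSingleton_apply,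
      smul_eq_mul, e6_mul_zel]
  have hTchar : ∀ u : ↥T, ∃ c : K,
      (u : Rp s K ⧸ radIdeal s K) = c • (radIdeal s K).mkQ (eIdem s K (vx s (r+1) 2)) := by
    rintro ⟨u, y, hyP, rfl⟩
    obtain ⟨c, y', hy'⟩ := peelAt (vx s (r+1) 2) (A s K (ai s (r+1) 2)) (hA6 r) (hG6 r) y
    refine ⟨c, ?_⟩
    show (radIdeal s K).mkQ y = _
    have hquot : (radIdeal s K).mkQ (y' * A s K (ai s (r+1) 2)) = 0 := by
      rw [Submodule.mkQ_apply, Submodule.Quotient.mk_eq_zero]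
      exact mul_mem_left' y' (A_mem_rad _)
    calc (radIdeal s K).mkQ y = (radIdeal s K).mkQ (y * eIdem s K (vx s (r+1) 2)) := by
          rw [mem_P_iff.mp hyP]
      _ = (radIdeal s K).mkQ (c • eIdem s K (vx s (r+1) 2) + y' * A s K (ai s (r+1) 2)) := by
          rw [hy']
      _ = c • (radIdeal s K).mkQ (eIdem s K (vx s (r+1) 2)) := by
          rw [map_add, LinearMap.map_smul_of_tower, hquot, add_zero]
  set f1 : ↥T →ₗ[Rp s K] Rp s K := g0.comp T.subtype with hf1def
  have hf1 : ∀ u : ↥T, ∃ c : K, f1 u = c • zel r ∧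
      (u : Rp s K ⧸ radIdeal s K) = c • (radIdeal s K).mkQ (eIdem s K (vx s (r+1) 2)) := by
    intro u
    obtain ⟨c, hc⟩ := hTchar u
    refine ⟨c, ?_, hc⟩
    show g0 (u : Rp s K ⧸ radIdeal s K) = c • zel r
    rw [hc, LinearMap.map_smul_of_tower, hg0e6]
  have hkerP : ∀ u : ↥T, f1 u ∈ P s K (vx s r 2) := by
    intro u
    obtain ⟨c, hfu, _⟩ := hf1 u
    rw [hfu]
    exact mem_P_iff.mpr (by rw [smul_mul_assoc, zel_mul_e2])
  have hkerA : ∀ u : ↥T, f1 u * A s K (ai s r 1) = 0 := by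
    intro u
    obtain ⟨c, hfu, _⟩ := hf1 u
    rw [hfu, smul_mul_assoc, zel_mul_alpha, smul_zero]
  set f2 : ↥T →ₗ[Rp s K] ↥(P s K (vx s r 2)) := f1.codRestrict _ hkerP with hf2def
  have hf2mem : ∀ u : ↥T, f2 u ∈ LinearMap.ker (stepMap s K (vx s r 2) (A s K (ai s r 1))) := by
    intro u
    rw [LinearMap.mem_ker]
    have : f2 u = ⟨f1 u, hkerP u⟩ := rfl
    rw [this, stepMap_apply]
    exact hkerA u
  set f3 : ↥T →ₗ[Rp s K] ↥(LinearMap.ker (stepMap s K (vx s r 2) (A s K (ai s r 1)))) :=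
    f2.codRestrict _ hf2mem with hf3def
  have hf3val : ∀ u : ↥T, ((f3 u : ↥(P s K (vx s r 2))) : Rp s K) = f1 u := fun u => rfl
  have hinj : Function.Injective f3 := by
    intro u v huv
    have h1 : f1 u = f1 v := by
      rw [← hf3val u, ← hf3val v, huv]
    obtain ⟨c, hcu, hcu'⟩ := hf1 u
    obtain ⟨d, hdv, hdv'⟩ := hf1 v
    have h2 : c • zel (K := K) r = d • zel r := by rw [← hcu, ← hdv, h1]
    have h5 : (c - d) • zel (K := K) r = 0 :=
      (sub_smul c d (zel (K := K) r)).trans (sub_eq_zero_of_eq h2)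
    have hcd : c = d := by
      by_contra hne
      apply zel_ne_zero (K := K) r
      calc zel (K := K) r = (1 : K) • zel (K := K) r := (one_smul K _).symm
        _ = ((c - d)⁻¹ * (c - d)) • zel (K := K) r := by
            rw [inv_mul_cancel₀ (sub_ne_zero.mpr hne)]
        _ = (c - d)⁻¹ • ((c - d) • zel (K := K) r) := mul_smul _ _ _
        _ = (c - d)⁻¹ • (0 : Rp s K) := congrArg (fun v => (c - d)⁻¹ • v) h5
        _ = 0 := smul_zero _
    apply Subtype.ext
    rw [hcu', hdv', hcd]
  have hsurj : Function.Surjective f3 := by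
    rintro ⟨⟨x, hxP⟩, hxk⟩
    have hx : x * eIdem s K (vx s r 2) = x := mem_P_iff.mp hxP
    have hxα : x * A s K (ai s r 1) = 0 := by
      have h := LinearMap.mem_ker.mp hxk
      rwa [stepMap_apply] at h
    obtain ⟨c₀, c₁, c₂, c₃, c₄, hch⟩ := chainP2 r x hx
    have hexp : x * A s K (ai s r 1)
        = c₀ • A s K (ai s r 1) + c₁ • (A s K (ai s r 2) * A s K (ai s r 1))
          + c₂ • (G s K r * (A s K (ai s r 2) * A s K (ai s r 1)))
          + c₃ • (A s K (ai s (r+1) 0)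
              * (G s K r * (A s K (ai s r 2) * A s K (ai s r 1)))) := by
      rw [hch]
      simp only [add_mul, smul_mul_assoc]
      rw [e2_mul_alpha, zel_mul_alpha, smul_zero, add_zero]
      simp only [mul_assoc]
    rw [hexp] at hxα
    obtain ⟨h0, h1, h2, h3⟩ := indepV r c₀ c₁ c₂ c₃ hxα
    have hxz : x = c₄ • zel r := by
      rw [hch, h0, h1, h2, h3]
      simp
    refine ⟨c₄ • ⟨(radIdeal s K).mkQ (eIdem s K (vx s (r+1) 2)),
      ⟨eIdem s K (vx s (r+1) 2), hmem_e6, rfl⟩⟩, ?_⟩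
    apply Subtype.ext
    apply Subtype.ext
    show ((f3 _ : ↥(P s K (vx s r 2))) : Rp s K) = x
    rw [hf3val, LinearMap.map_smul_of_tower]
    have : f1 (⟨(radIdeal s K).mkQ (eIdem s K (vx s (r+1) 2)),
        ⟨eIdem s K (vx s (r+1) 2), hmem_e6, rfl⟩⟩ : ↥T) = zel r := hg0e6
    rw [this, ← hxz]
  exact ⟨(LinearEquiv.ofBijective f3 ⟨hinj, hsurj⟩).symm⟩

end E6X
end Final


/-- For the algebra `R = R'ₛ` of tree class `E₆` and every `r`, the beginning of the minimal
projective resolution of the simple module `S_{4r+1}` is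
`⋯ → P_{4r+2} →^α P_{4r+1} → S_{4r+1} → 0`: the image of right multiplication by the arrow
`α_{3r+1}` on `P_{4r+2}` is exactly the radical `rad P_{4r+1}` (the kernel of
`P_{4r+1} → S_{4r+1}`), and the second syzygy satisfies `Ω²(S_{4r+1}) ≅ S_{4(r+1)+2}`, i.e.
the kernel of this map is isomorphic to `S_{4(r+1)+2}`. -/
theorem syzygy_two_of_S1 (K : Type) [Field K] (s : ℕ) [NeZero s] (hs : 1 ≤ s)
    (r : ZMod (2 * s)) :
    LinearMap.range (E6.stepMap s K (E6.vx s r 2) (E6.A s K (E6.ai s r 1)))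
        = Submodule.map (E6.P s K (E6.vx s r 1)).subtype (E6.radP s K (E6.vx s r 1)) ∧
    Nonempty
      (↥(LinearMap.ker (E6.stepMap s K (E6.vx s r 2) (E6.A s K (E6.ai s r 1))))
        ≃ₗ[E6.Rp s K] E6.S s K (E6.vx s (r + 1) 2)) := by
  exact ⟨E6X.part1 r, E6X.part2 r⟩
end
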